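/- arXiv:0812.2421 — 7 statements merged into one kernel-verified Lean document; each statement's English description precedes it below -/
import Mathlib

section
/- Let μ be a Borel measure on ℝ^m, s > 0, j a nonnegative integer with j < s, and M, C₂, ν > 0. Suppose μ(B(x,r)) ≤ M r^s for all x ∈ ℝ^m and r > 0 (polynomial growth), and suppose F ⊂ B(x₀, r) is a set with μ(F) ≥ C₂ r^s such that every point of F lies within distance νr of some fixed j-dimensional affine subspace L. Then C₂ ≤ C(m) M ν^{s−j}, where C(m) depends only on m; in particular, if ν is sufficiently small (depending only on m, s, j, C₂, M) this is impossible. -/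
/-!
A point of `F` lies within `νr` of a point of `L ∩ B(x₀, 2r)`. By volume packing in the direction
space of `L`, this `j`-dimensional piece is covered by `(17/ν)^j` balls of radius `νr/2`, and each
concentric ball of radius `3νr/2` by `4^m` balls of radius `νr`. The growth bound on each of these
balls gives `C₂ r^s ≤ μ F ≤ (17/ν)^j 4^m M (νr)^s`. For `ν > 1` the claim already follows from
`C₂ ≤ M`, the growth bound on `B(x₀, r)` itself.
-/

open MeasureTheory Metric Set
open scoped ENNReal

theorem measure_le_card_mul_of_subset_iUnion_ball {X : Type*} [PseudoMetricSpace X]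
    [MeasurableSpace X] {μ : Measure X} {ρ : ℝ} {c : ℝ≥0∞} (hμ : ∀ x, μ (ball x ρ) ≤ c)
    {F : Set X} {T : Finset X} (hF : F ⊆ ⋃ t ∈ T, ball t ρ) : μ F ≤ T.card * c := calc
  μ F ≤ ∑ t ∈ T, μ (ball t ρ) := (measure_mono hF).trans (measure_biUnion_finset_le T _)
  _ ≤ T.card * c := by simpa using Finset.sum_le_card_nsmul T _ c fun t _ => hμ t

theorem le_of_ofReal_mul_le_ofReal_mul {a b c : ℝ} (hc : 0 < c) (hb : 0 ≤ b)
    (h : ENNReal.ofReal (a * c) ≤ ENNReal.ofReal (b * c)) : a ≤ b := by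
  rw [ENNReal.ofReal_le_ofReal_iff (by positivity)] at h
  exact le_of_mul_le_mul_right h hc

section FiniteDimensional

variable {E : Type*} [NormedAddCommGroup E] [NormedSpace ℝ E] [FiniteDimensional ℝ E]

open Module

theorem Finset.card_le_of_pairwise_le_dist {T : Finset E} {x : E} {R ε : ℝ} (hε : 0 < ε)
    (hR : 0 ≤ R) (hT : ↑T ⊆ closedBall x R) (hsep : (T : Set E).Pairwise (ε ≤ dist · ·)) :
    (T.card : ℝ) ≤ (2 * R / ε + 1) ^ finrank ℝ E := by
  borelize E
  set μ : Measure E := Measure.addHaar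
  have hdisj : (T : Set E).PairwiseDisjoint fun t => ball t (ε / 2) := fun a ha b hb hab =>
    ball_disjoint_ball (by linarith [hsep ha hb hab])
  have hsub : ⋃ t ∈ T, ball t (ε / 2) ⊆ ball x (R + ε / 2) := iUnion₂_subset fun t ht =>
    ball_subset_ball' (by linarith [mem_closedBall.1 (hT ht)])
  have hvol : (T.card : ℝ≥0∞) * μ (ball x (ε / 2)) ≤ μ (ball x (R + ε / 2)) := calc
    _ = ∑ t ∈ T, μ (ball t (ε / 2)) := by
      simp only [μ.addHaar_ball_center _ (ε / 2), Finset.sum_const, nsmul_eq_mul]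
    _ = μ (⋃ t ∈ T, ball t (ε / 2)) :=
      (measure_biUnion_finset hdisj fun _ _ => measurableSet_ball).symm
    _ ≤ _ := measure_mono hsub
  rw [μ.addHaar_ball_of_pos x (half_pos hε), μ.addHaar_ball_of_pos x (by positivity),
    ← mul_assoc, ENNReal.mul_le_mul_iff_left (measure_ball_pos μ _ one_pos).ne'
      measure_ball_lt_top.ne, ← ENNReal.ofReal_natCast, ← ENNReal.ofReal_mul (by positivity),
    ENNReal.ofReal_le_ofReal_iff (by positivity)] at hvol
  have hscale : 2 * R / ε + 1 = (R + ε / 2) / (ε / 2) := by field_simp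
  rw [hscale, div_pow, le_div_iff₀ (by positivity)]
  exact hvol

theorem exists_finset_card_le_subset_iUnion_ball {A : Set E} {x : E} {R ε : ℝ} (hε : 0 < ε)
    (hR : 0 ≤ R) (hA : A ⊆ closedBall x R) :
    ∃ T : Finset E, (T.card : ℝ) ≤ (2 * R / ε + 1) ^ finrank ℝ E ∧ A ⊆ ⋃ t ∈ T, ball t ε := by
  classical
  -- a separated subset of maximal cardinality is an `ε`-net
  set S := {T : Finset E | ↑T ⊆ A ∧ (T : Set E).Pairwise (ε ≤ dist · ·)}
  have hS : ∀ T ∈ S, (T.card : ℝ) ≤ (2 * R / ε + 1) ^ finrank ℝ E := fun T hT =>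
    Finset.card_le_of_pairwise_le_dist hε hR (hT.1.trans hA) hT.2
  have hbdd : BddAbove (Finset.card '' S) :=
    ⟨⌊(2 * R / ε + 1) ^ finrank ℝ E⌋₊, forall_mem_image.2 fun T hT => Nat.le_floor (hS T hT)⟩
  obtain ⟨T, hTS, hTsup⟩ := Nat.sSup_mem (s := Finset.card '' S) ⟨0, ∅, by simp [S], rfl⟩ hbdd
  refine ⟨T, hS T hTS, fun y hy => ?_⟩
  by_contra hyT
  simp only [mem_iUnion, mem_ball, exists_prop, not_exists, not_and, not_lt] at hyT
  have hyS : insert y T ∈ S := by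
    refine ⟨Finset.coe_insert y T ▸ insert_subset hy hTS.1, ?_⟩
    rw [Finset.coe_insert]
    exact hTS.2.insert fun t ht _ => ⟨hyT t ht, dist_comm y t ▸ hyT t ht⟩
  have hy : y ∉ T := fun h => by linarith [hyT y h, dist_self y]
  have := le_csSup hbdd (mem_image_of_mem _ hyS)
  rw [Finset.card_insert_of_notMem hy, hTsup] at this
  omega

theorem AffineSubspace.exists_finset_cover_inter_closedBall (L : AffineSubspace ℝ E)
    (hL : (L : Set E).Nonempty) (x₀ : E) {R ε : ℝ} (hR : 0 ≤ R) (hε : 0 < ε) :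
    ∃ T : Finset E, (T.card : ℝ) ≤ (4 * R / ε + 1) ^ finrank ℝ L.direction ∧
      (L : Set E) ∩ closedBall x₀ R ⊆ ⋃ t ∈ T, ball t ε := by
  classical
  have hLc : IsClosed (L : Set E) := L.closed_of_finiteDimensional
  obtain ⟨p₀, hp₀L, hp₀⟩ := hLc.exists_infDist_eq_dist hL x₀
  obtain ⟨T, hTcard, hT⟩ := exists_finset_card_le_subset_iUnion_ball (E := L.direction)
    hε (by positivity : 0 ≤ 2 * R) (subset_refl (closedBall 0 (2 * R)))
  refine ⟨T.image fun v : L.direction => (v : E) + p₀,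
    (Nat.cast_le.2 Finset.card_image_le).trans ?_, fun p ⟨hpL, hpx₀⟩ => ?_⟩
  · rwa [show 2 * (2 * R) / ε = 4 * R / ε by ring] at hTcard
  set v : L.direction := ⟨p - p₀, vsub_eq_sub p p₀ ▸ L.vsub_mem_direction hpL hp₀L⟩
  have hv : v ∈ closedBall 0 (2 * R) := by
    rw [mem_closedBall_zero_iff, Submodule.coe_norm, ← dist_eq_norm]
    have := infDist_le_dist_of_mem (x := x₀) hpL
    linarith [dist_triangle p x₀ p₀, dist_comm p x₀, mem_closedBall.1 hpx₀]
  obtain ⟨t, htT, hvt⟩ := mem_iUnion₂.1 (hT hv)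
  refine mem_iUnion₂.2 ⟨_, Finset.mem_image_of_mem _ htT, ?_⟩
  rw [mem_ball, Subtype.dist_eq] at hvt
  rwa [mem_ball, dist_eq_norm, ← sub_sub, sub_right_comm, ← dist_eq_norm]

theorem AffineSubspace.exists_finset_cover_thickening_inter_ball (L : AffineSubspace ℝ E)
    (hL : (L : Set E).Nonempty) (x₀ : E) {r ν : ℝ} (hr : 0 < r) (hν : 0 < ν) (hν1 : ν ≤ 1) :
    ∃ T : Finset E, (T.card : ℝ) ≤ (17 / ν) ^ finrank ℝ L.direction * 4 ^ finrank ℝ E ∧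
      {y ∈ ball x₀ r | infDist y L ≤ ν * r} ⊆ ⋃ t ∈ T, ball t (ν * r) := by
  classical
  set δ := ν * r / 2 with hδ
  have hδ0 : 0 < δ := by positivity
  obtain ⟨T₁, hT₁card, hT₁⟩ :=
    L.exists_finset_cover_inter_closedBall hL x₀ (by positivity : 0 ≤ 2 * r) hδ0
  have hball : ∀ c : E, ∃ T : Finset E, (T.card : ℝ) ≤ 4 ^ finrank ℝ E ∧
      closedBall c (3 * δ) ⊆ ⋃ t ∈ T, ball t (2 * δ) := fun c => by
    obtain ⟨T, hTcard, hT⟩ := exists_finset_card_le_subset_iUnion_ball (x := c)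
      (by positivity : 0 < 2 * δ) (by positivity : 0 ≤ 3 * δ) subset_rfl
    refine ⟨T, hTcard.trans_eq ?_, hT⟩
    congr 1
    field_simp
    norm_num
  choose T₂ hT₂card hT₂ using hball
  refine ⟨T₁.biUnion T₂, ?_, ?_⟩
  · have hν17 : 4 * (2 * r) / δ + 1 ≤ 17 / ν := by
      rw [hδ, div_add_one (by positivity), div_le_div_iff₀ (by positivity) hν]; nlinarith
    calc ((T₁.biUnion T₂).card : ℝ) ≤ ∑ c ∈ T₁, ((T₂ c).card : ℝ) := by
          exact_mod_cast Finset.card_biUnion_le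
      _ ≤ T₁.card * 4 ^ finrank ℝ E := by
          simpa using Finset.sum_le_card_nsmul T₁ _ _ fun c _ => hT₂card c
      _ ≤ (17 / ν) ^ finrank ℝ L.direction * 4 ^ finrank ℝ E := by
          gcongr
          exact hT₁card.trans (pow_le_pow_left₀ (by positivity) hν17 _)
  · rintro y ⟨hy, hyL⟩
    obtain ⟨p, hpL, hyp⟩ := L.closed_of_finiteDimensional.exists_infDist_eq_dist hL y
    have hp : p ∈ (L : Set E) ∩ closedBall x₀ (2 * r) := by
      refine ⟨hpL, mem_closedBall.2 ?_⟩
      nlinarith [dist_triangle p y x₀, dist_comm p y, mem_ball.1 hy]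
    obtain ⟨c, hcT₁, hpc⟩ := mem_iUnion₂.1 (hT₁ hp)
    have hyc : y ∈ closedBall c (3 * δ) := by
      rw [mem_closedBall]
      linarith [dist_triangle y p c, mem_ball.1 hpc]
    obtain ⟨u, huT₂, hyu⟩ := mem_iUnion₂.1 (hT₂ c hyc)
    refine mem_iUnion₂.2 ⟨u, Finset.mem_biUnion.2 ⟨c, hcT₁, huT₂⟩, ?_⟩
    rwa [hδ, mul_div_cancel₀ _ two_ne_zero] at hyu

theorem AffineSubspace.measure_thickening_inter_ball_le [MeasurableSpace E] {μ : Measure E}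
    {M s : ℝ}
    (hμ : ∀ (x : E) (t : ℝ), 0 < t → μ (ball x t) ≤ ENNReal.ofReal (M * t ^ s)) (hM : 0 ≤ M)
    (L : AffineSubspace ℝ E) (hL : (L : Set E).Nonempty) (x₀ : E) {r ν : ℝ} (hr : 0 < r)
    (hν : 0 < ν) (hν1 : ν ≤ 1) :
    μ {y ∈ ball x₀ r | infDist y L ≤ ν * r} ≤ ENNReal.ofReal
      ((17 / ν) ^ finrank ℝ L.direction * 4 ^ finrank ℝ E * M * (ν * r) ^ s) := by
  obtain ⟨T, hTcard, hT⟩ := L.exists_finset_cover_thickening_inter_ball hL x₀ hr hν hν1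
  calc μ {y ∈ ball x₀ r | infDist y L ≤ ν * r}
      ≤ T.card * ENNReal.ofReal (M * (ν * r) ^ s) :=
        measure_le_card_mul_of_subset_iUnion_ball (fun x => hμ x _ (by positivity)) hT
    _ = ENNReal.ofReal (T.card * (M * (ν * r) ^ s)) := by
        rw [← ENNReal.ofReal_natCast, ← ENNReal.ofReal_mul (by positivity)]
    _ ≤ _ := by
        rw [← mul_assoc]
        gcongr

end FiniteDimensional

/-- If a set of measure `≥ C₂ r^s` inside a ball of radius `r` lies within distance `ν r`
of a `j`-dimensional affine subspace, and `μ` has growth `μ(B(x,t)) ≤ M t^s`, then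
`C₂ ≤ C(m) M ν^{s-j}`. -/
theorem flat_concentration_bound (m : ℕ) :
    ∃ C : ℝ, 0 < C ∧
      ∀ (s : ℝ) (j : ℕ) (M C₂ ν : ℝ)
        (μ : Measure (EuclideanSpace ℝ (Fin m)))
        (x₀ : EuclideanSpace ℝ (Fin m)) (r : ℝ)
        (F : Set (EuclideanSpace ℝ (Fin m)))
        (L : AffineSubspace ℝ (EuclideanSpace ℝ (Fin m))),
        0 < s → (j : ℝ) < s → 0 < M → 0 < C₂ → 0 < ν → 0 < r →
        (L : Set (EuclideanSpace ℝ (Fin m))).Nonempty →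
        Module.finrank ℝ L.direction = j →
        (∀ (x : EuclideanSpace ℝ (Fin m)) (t : ℝ), 0 < t →
          μ (ball x t) ≤ ENNReal.ofReal (M * t ^ s)) →
        F ⊆ ball x₀ r →
        ENNReal.ofReal (C₂ * r ^ s) ≤ μ F →
        (∀ y ∈ F, Metric.infDist y (L : Set (EuclideanSpace ℝ (Fin m))) ≤ ν * r) →
        C₂ ≤ C * M * ν ^ (s - (j : ℝ)) := by
  refine ⟨68 ^ m, by positivity, ?_⟩
  intro s j M C₂ ν μ x₀ r F L _ hjs hM _ hν hr hL hdim hgrowth hFball hμF hFnear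
  have hrs : 0 < r ^ s := Real.rpow_pos_of_pos hr s
  rcases le_or_gt ν 1 with hν1 | hν1
  · have hFflat : F ⊆ {y ∈ ball x₀ r | infDist y L ≤ ν * r} := fun y hy =>
      ⟨hFball hy, hFnear y hy⟩
    have hμF' := (measure_mono hFflat).trans
      (L.measure_thickening_inter_ball_le hgrowth hM.le hL x₀ hr hν hν1)
    rw [finrank_euclideanSpace_fin, hdim, Real.mul_rpow hν.le hr.le, ← mul_assoc] at hμF'
    have hj : j ≤ m := by simpa [hdim] using Submodule.finrank_le L.direction
    calc C₂ ≤ (17 / ν) ^ j * 4 ^ m * M * ν ^ s :=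
          le_of_ofReal_mul_le_ofReal_mul hrs (by positivity) (hμF.trans hμF')
      _ = 17 ^ j * 4 ^ m * M * ν ^ (s - j) := by
        rw [Real.rpow_sub hν, Real.rpow_natCast, div_pow]
        field_simp
      _ ≤ 17 ^ m * 4 ^ m * M * ν ^ (s - j) := by gcongr; norm_num
      _ = 68 ^ m * M * ν ^ (s - j) := by rw [← mul_pow]; norm_num
  · have hC₂M : C₂ ≤ M := le_of_ofReal_mul_le_ofReal_mul hrs hM.le
      (hμF.trans ((measure_mono hFball).trans (hgrowth x₀ r hr)))
    calc C₂ ≤ 1 * M * 1 := by simpa using hC₂M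
      _ ≤ 68 ^ m * M * ν ^ (s - j) := by
        gcongr
        · exact one_le_pow₀ (by norm_num)
        · exact Real.one_le_rpow hν1.le (by linarith)
end

section
/- Let μ be a Borel measure on ℝ^m with μ(B(x,r)) ≤ M r^s for all x, r, where n < s ≤ n+1 ≤ m for an integer n. Suppose F ⊂ B(x₀,r) satisfies μ(F) ≥ C₂ r^s. Then there exist a constant C₃ > 0 depending only on m, n, s, C₂, M, and points y₀, …, y_{n+1} ∈ F such that for each j = 1, …, n+1, the distance from y_j to the affine span of y₀, …, y_{j−1} is at least C₃ r. -/
/-!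
If every point of `F` were within `εr` of an affine subspace `V` of dimension `≤ n` through a
point `c ∈ F`, then `F ⊆ B(c, 2r)` would lie in the `εr`-neighbourhood of `V`. A volume-packing
count in the direction of `V` covers that part of the neighbourhood by `(4/ε + 3)ⁿ` balls of
radius `2εr`, of total measure `≤ (4/ε + 3)ⁿ M (2εr)^s ≈ ε^(s-n) r^s`; since `s > n` this is
`< C₂ r^s ≤ μ F` for small `ε`. Hence some point of `F` is `εr`-far from `V`, and the points are
chosen greedily: `y j` is `εr`-far from the span of the previous points, whose dimension is
`< j ≤ n + 1`.
-/

open MeasureTheory Metric Set Filter Topology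
open scoped ENNReal NNReal

section Packing

variable {W : Type*} [NormedAddCommGroup W] [NormedSpace ℝ W] [FiniteDimensional ℝ W]

theorem Finset.card_le_of_isSeparated_of_subset_closedBall {T : Finset W} {x : W} {R : ℝ}
    {ε : ℝ≥0} (hR : 0 ≤ R) (hε : 0 < ε) (hT : (T : Set W) ⊆ closedBall x R)
    (hsep : IsSeparated ε (T : Set W)) :
    (T.card : ℝ) ≤ (2 * R / ε + 1) ^ Module.finrank ℝ W := by
  let _ : MeasurableSpace W := borel W
  have : BorelSpace W := ⟨rfl⟩
  set μ : Measure W := Measure.addHaar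
  set k := Module.finrank ℝ W
  have hdisj : (T : Set W).PairwiseDisjoint fun t => ball t (ε / 2) := by
    intro a ha b hb hab
    refine disjoint_ball_ball_iff (by positivity) (by positivity) |>.2 ?_
    have h : (ε : ℝ≥0∞) < edist a b := hsep ha hb hab
    rw [edist_nndist, ENNReal.coe_lt_coe, ← NNReal.coe_lt_coe, coe_nndist] at h
    linarith
  have hsub : (⋃ t ∈ T, ball t (ε / 2)) ⊆ ball x (R + ε / 2) :=
    iUnion₂_subset fun t ht => ball_subset_ball' (by linarith [mem_closedBall.1 (hT ht)])
  have hball (y : W) {ρ : ℝ} (hρ : 0 < ρ) :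
      μ (ball y ρ) = ENNReal.ofReal (ρ ^ k) * μ (ball 0 1) :=
    Measure.addHaar_ball_of_pos μ y hρ
  have hle : (T.card : ℝ≥0∞) * ENNReal.ofReal ((ε / 2 : ℝ) ^ k) * μ (ball 0 1) ≤
      ENNReal.ofReal ((R + ε / 2) ^ k) * μ (ball 0 1) := calc
    _ = ∑ t ∈ T, μ (ball t (ε / 2)) := by
      rw [Finset.sum_congr rfl fun t _ => hball t (by positivity), Finset.sum_const, nsmul_eq_mul,
        mul_assoc]
    _ = μ (⋃ t ∈ T, ball t (ε / 2)) :=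
      (measure_biUnion_finset hdisj fun _ _ => measurableSet_ball).symm
    _ ≤ μ (ball x (R + ε / 2)) := measure_mono hsub
    _ = _ := hball x (by positivity)
  rw [ENNReal.mul_le_mul_iff_left (measure_ball_pos μ 0 one_pos).ne' measure_ball_lt_top.ne,
    ← ENNReal.ofReal_natCast, ← ENNReal.ofReal_mul (by positivity),
    ENNReal.ofReal_le_ofReal_iff (by positivity), ← le_div_iff₀ (by positivity), ← div_pow] at hle
  rwa [show (R + ε / 2) / (ε / 2) = 2 * R / ε + 1 by field_simp] at hle

theorem packingNumber_closedBall_le (x : W) {R : ℝ} {ε : ℝ≥0} (hR : 0 ≤ R) (hε : 0 < ε) :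
    packingNumber ε (closedBall x R) ≤ ⌊(2 * R / ε + 1) ^ Module.finrank ℝ W⌋₊ := by
  refine iSup₂_le fun C hC => iSup_le fun hsep => ?_
  by_contra! hlt
  obtain ⟨T, hTC, hTcard⟩ := exists_subset_encard_eq (Order.add_one_le_of_lt hlt)
  obtain ⟨T, rfl⟩ := (finite_of_encard_eq_coe hTcard).exists_finset_coe
  have hcard :=
    T.card_le_of_isSeparated_of_subset_closedBall hR hε (hTC.trans hC) (hsep.subset hTC)
  rw [encard_coe_eq_coe_finsetCard] at hTcard
  norm_cast at hTcard
  rw [hTcard, Nat.cast_add_one] at hcard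
  exact (Nat.lt_floor_add_one _).not_ge hcard

theorem exists_finset_isCover_closedBall (x : W) {R : ℝ} {ε : ℝ≥0} (hR : 0 ≤ R) (hε : 0 < ε) :
    ∃ T : Finset W, IsCover ε (closedBall x R) T ∧
      (T.card : ℝ) ≤ (2 * R / ε + 1) ^ Module.finrank ℝ W := by
  have hfin : packingNumber ε (closedBall x R) ≠ ⊤ :=
    ne_top_of_le_ne_top (ENat.natCast_ne_top _) (packingNumber_closedBall_le x hR hε)
  have hC : (maximalSeparatedSet ε (closedBall x R)).Finite :=
    encard_ne_top_iff.1 ((encard_maximalSeparatedSet hfin).trans_ne hfin)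
  obtain ⟨T, hT⟩ := hC.exists_finset_coe
  refine ⟨T, hT ▸ isCover_maximalSeparatedSet hfin, ?_⟩
  exact T.card_le_of_isSeparated_of_subset_closedBall hR hε (hT ▸ maximalSeparatedSet_subset)
    (hT ▸ isSeparated_maximalSeparatedSet)

end Packing

section Slab

variable {E : Type*} [NormedAddCommGroup E] [NormedSpace ℝ E]
  {V : AffineSubspace ℝ E} [FiniteDimensional ℝ V.direction] {c : E} {R δ : ℝ}

theorem exists_finset_ball_inter_thickening_subset (hc : c ∈ V) (hR : 0 ≤ R) (hδ : 0 < δ) :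
    ∃ T : Finset E, ball c R ∩ thickening δ (V : Set E) ⊆ ⋃ t ∈ T, ball t (2 * δ) ∧
      (T.card : ℝ) ≤ (2 * (R + δ) / δ + 1) ^ Module.finrank ℝ V.direction := by
  classical
  obtain ⟨T, hTcover, hTcard⟩ := exists_finset_isCover_closedBall (0 : V.direction)
    (R := R + δ) (ε := ⟨δ, hδ.le⟩) (by positivity) hδ
  refine ⟨T.image fun w : V.direction => c + (w : E), ?_,
    (Nat.cast_le.2 Finset.card_image_le).trans hTcard⟩
  rintro x ⟨hxc, hxV⟩
  obtain ⟨z, hzV, hxz⟩ := mem_thickening_iff.1 hxV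
  have hzc : dist z c < R + δ := by
    linarith [dist_triangle z x c, dist_comm x z, mem_ball.1 hxc]
  let w : V.direction := ⟨z - c, AffineSubspace.vsub_mem_direction hzV hc⟩
  obtain ⟨t, ht, hwt⟩ := mem_iUnion₂.1 (isCover_iff_subset_iUnion_closedBall.1 hTcover
    (mem_closedBall_zero_iff.2 (show ‖w‖ ≤ R + δ by simpa [w, dist_eq_norm] using hzc.le)))
  refine mem_iUnion₂.2 ⟨c + (t : E), Finset.mem_image_of_mem _ ht, ?_⟩
  have hzt : dist z (c + (t : E)) ≤ δ := by
    rw [mem_closedBall, Subtype.dist_eq, dist_eq_norm] at hwt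
    rw [dist_eq_norm, ← sub_sub]
    exact hwt
  rw [mem_ball]
  linarith [dist_triangle x z (c + (t : E))]

theorem measure_ball_inter_thickening_le [MeasurableSpace E] {μ : Measure E} {M s : ℝ}
    (hμ : ∀ x t, 0 < t → μ (ball x t) ≤ ENNReal.ofReal (M * t ^ s))
    (hc : c ∈ V) (hR : 0 ≤ R) (hδ : 0 < δ) :
    μ (ball c R ∩ thickening δ (V : Set E)) ≤
      ENNReal.ofReal
        ((2 * (R + δ) / δ + 1) ^ Module.finrank ℝ V.direction * (M * (2 * δ) ^ s)) := by
  obtain ⟨T, hcover, hcard⟩ := exists_finset_ball_inter_thickening_subset hc hR hδ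
  calc μ (ball c R ∩ thickening δ (V : Set E))
      ≤ ∑ t ∈ T, μ (ball t (2 * δ)) := (measure_mono hcover).trans (measure_biUnion_finset_le _ _)
    _ ≤ T.card * ENNReal.ofReal (M * (2 * δ) ^ s) := by
      simpa using Finset.sum_le_sum fun t _ => hμ t (2 * δ) (by positivity)
    _ ≤ _ := by
      rw [ENNReal.ofReal_mul (by positivity : (0 : ℝ) ≤ (2 * (R + δ) / δ + 1) ^ _),
        ← ENNReal.ofReal_natCast]
      exact mul_le_mul_left (ENNReal.ofReal_le_ofReal hcard) _

end Slab

theorem exists_pos_pow_mul_rpow_lt {n : ℕ} {s : ℝ} (hn : (n : ℝ) < s) (M : ℝ) {C : ℝ}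
    (hC : 0 < C) : ∃ ε : ℝ, 0 < ε ∧ (4 / ε + 3) ^ n * (M * (2 * ε) ^ s) < C := by
  have hsn : 0 < s - n := sub_pos.2 hn
  set g : ℝ → ℝ := fun ε => M * 2 ^ s * (4 + 3 * ε) ^ n * ε ^ (s - n)
  have hg : Tendsto g (𝓝 0) (𝓝 0) := by
    have : ContinuousAt g 0 := by
      have := Real.continuousAt_rpow_const 0 _ (Or.inr hsn.le)
      fun_prop
    simpa [g, Real.zero_rpow hsn.ne'] using this.tendsto
  obtain ⟨ε, hgε, hε : 0 < ε⟩ :=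
    ((hg.mono_left nhdsWithin_le_nhds).eventually (gt_mem_nhds hC)).and
      (self_mem_nhdsWithin : Ioi (0 : ℝ) ∈ 𝓝[>] 0) |>.exists
  refine ⟨ε, hε, lt_of_eq_of_lt ?_ hgε⟩
  simp only [g]
  rw [Real.mul_rpow zero_le_two hε.le, Real.rpow_sub hε, Real.rpow_natCast,
    show 4 / ε + 3 = (4 + 3 * ε) / ε by field_simp, div_pow]
  field_simp

section FarPoint

variable {E : Type*} [NormedAddCommGroup E] [NormedSpace ℝ E] [MeasurableSpace E]

theorem exists_mem_le_infDist_of_le_measure {μ : Measure E} {n : ℕ} {s M C ε r : ℝ}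
    {x₀ : E} {F : Set E} (hμ : ∀ x t, 0 < t → μ (ball x t) ≤ ENNReal.ofReal (M * t ^ s))
    (hM : 0 ≤ M) (hε : 0 < ε) (hr : 0 < r) (hεC : (4 / ε + 3) ^ n * (M * (2 * ε) ^ s) < C)
    (hF : F ⊆ ball x₀ r) (hμF : ENNReal.ofReal (C * r ^ s) ≤ μ F)
    (V : AffineSubspace ℝ E) [FiniteDimensional ℝ V.direction]
    (hV : Module.finrank ℝ V.direction ≤ n) (hVF : ((V : Set E) ∩ F).Nonempty) :
    ∃ z ∈ F, ε * r ≤ infDist z V := by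
  obtain ⟨c, hcV, hcF⟩ := hVF
  by_contra! hnear
  have hsub : F ⊆ ball c (2 * r) ∩ thickening (ε * r) (V : Set E) := fun z hz =>
    ⟨mem_ball.2 (by linarith [dist_triangle z x₀ c, mem_ball.1 (hF hz), mem_ball'.1 (hF hcF)]),
      (mem_thickening_iff_infDist_lt ⟨c, hcV⟩).2 (hnear z hz)⟩
  have hrs : 0 < r ^ s := Real.rpow_pos_of_pos hr s
  have hC : 0 < C := lt_of_le_of_lt (by positivity) hεC
  have hbound : (2 * (2 * r + ε * r) / (ε * r) + 1) ^ Module.finrank ℝ V.direction *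
      (M * (2 * (ε * r)) ^ s) < C * r ^ s := calc
    _ = (4 / ε + 3) ^ Module.finrank ℝ V.direction * (M * (2 * ε) ^ s) * r ^ s := by
      rw [← mul_assoc 2 ε r, Real.mul_rpow (by positivity) hr.le]
      field_simp
      ring
    _ ≤ (4 / ε + 3) ^ n * (M * (2 * ε) ^ s) * r ^ s := by
      gcongr
      linarith [div_pos four_pos hε]
    _ < C * r ^ s := by gcongr
  have := (measure_mono hsub).trans
    (measure_ball_inter_thickening_le hμ hcV (by positivity) (by positivity))
  exact (ENNReal.ofReal_lt_ofReal_iff (by positivity)).2 hbound |>.trans_le hμF |>.not_ge this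

end FarPoint

theorem Fin.image_snoc_setOf_val_lt {α : Type*} {l : ℕ} (y : Fin l → α) (z : α) {j : ℕ}
    (hj : j ≤ l) :
    (Fin.snoc y z : Fin (l + 1) → α) '' {i | (i : ℕ) < j} = y '' {i | (i : ℕ) < j} := by
  have : {i : Fin (l + 1) | (i : ℕ) < j} = Fin.castSucc '' {i | (i : ℕ) < j} := by
    ext i
    refine ⟨fun hi => ⟨i.castLT (lt_of_lt_of_le hi hj), hi, Fin.castSucc_castLT _ _⟩, ?_⟩
    rintro ⟨i, hi, rfl⟩
    exact hi
  rw [this, image_image]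
  simp only [Fin.snoc_castSucc]

section Spread

variable {E : Type*} [NormedAddCommGroup E] [NormedSpace ℝ E] {δ : ℝ}

-- `j = 0` is excluded: the span of no points is empty, and `infDist` to `∅` is `0`.
def IsSpread (δ : ℝ) {k : ℕ} (y : Fin k → E) : Prop :=
  ∀ j : Fin k, 1 ≤ (j : ℕ) →
    δ ≤ infDist (y j) (affineSpan ℝ (y '' {i | (i : ℕ) < j}) : Set E)

theorem isSpread_of_fin_one (y : Fin 1 → E) : IsSpread δ y :=
  fun j hj => absurd j.isLt (by omega)

theorem IsSpread.snoc {l : ℕ} {y : Fin l → E} (hy : IsSpread δ y) {z : E}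
    (hz : δ ≤ infDist z (affineSpan ℝ (range y) : Set E)) :
    IsSpread δ (Fin.snoc y z : Fin (l + 1) → E) := by
  intro j hj
  induction j using Fin.lastCases with
  | last =>
    rwa [Fin.snoc_last, Fin.val_last, Fin.image_snoc_setOf_val_lt y z le_rfl,
      show {i : Fin l | (i : ℕ) < l} = univ from eq_univ_of_forall Fin.is_lt, image_univ]
  | cast j =>
    rw [Fin.snoc_castSucc, Fin.val_castSucc, Fin.image_snoc_setOf_val_lt y z j.isLt.le]
    exact hy j hj

theorem exists_isSpread_of_forall_exists_le_infDist {n : ℕ} {F : Set E} (hF : F.Nonempty)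
    (hfar : ∀ (V : AffineSubspace ℝ E) [FiniteDimensional ℝ V.direction],
      Module.finrank ℝ V.direction ≤ n → ((V : Set E) ∩ F).Nonempty →
        ∃ z ∈ F, δ ≤ infDist z V)
    {l : ℕ} (hl : l ≤ n + 1) : ∃ y : Fin (l + 1) → E, (∀ i, y i ∈ F) ∧ IsSpread δ y := by
  induction l with
  | zero =>
    obtain ⟨p, hp⟩ := hF
    exact ⟨fun _ => p, fun _ => hp, isSpread_of_fin_one _⟩
  | succ l ih =>
    obtain ⟨y, hyF, hy⟩ := ih (by omega)
    have hdim : Module.finrank ℝ (affineSpan ℝ (range y)).direction ≤ n := by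
      rw [direction_affineSpan]
      exact (finrank_vectorSpan_range_le ℝ y (Fintype.card_fin _)).trans (by omega)
    obtain ⟨z, hzF, hz⟩ :=
      hfar _ hdim ⟨y 0, subset_affineSpan ℝ _ (mem_range_self 0), hyF 0⟩
    refine ⟨Fin.snoc y z, fun i => ?_, hy.snoc hz⟩
    induction i using Fin.lastCases with
    | last => simpa using hzF
    | cast i => simpa using hyF i

end Spread

theorem exists_spread_points_general (m n : ℕ) (s C₂ M : ℝ)
    (hn : (n : ℝ) < s)
    (hC₂ : 0 < C₂) (hM : 0 < M) :
    ∃ C₃ : ℝ, 0 < C₃ ∧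
      ∀ (μ : Measure (EuclideanSpace ℝ (Fin m))) (x₀ : EuclideanSpace ℝ (Fin m))
        (r : ℝ) (F : Set (EuclideanSpace ℝ (Fin m))),
        0 < r →
        (∀ (x : EuclideanSpace ℝ (Fin m)) (t : ℝ), 0 < t →
          μ (ball x t) ≤ ENNReal.ofReal (M * t ^ s)) →
        F ⊆ ball x₀ r →
        ENNReal.ofReal (C₂ * r ^ s) ≤ μ F →
        ∃ y : Fin (n + 2) → EuclideanSpace ℝ (Fin m),
          (∀ i, y i ∈ F) ∧
          ∀ j : Fin (n + 2), 1 ≤ (j : ℕ) →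
            C₃ * r ≤ Metric.infDist (y j)
              ((affineSpan ℝ (y '' {i | (i : ℕ) < (j : ℕ)}) :
                AffineSubspace ℝ (EuclideanSpace ℝ (Fin m))) :
                Set (EuclideanSpace ℝ (Fin m))) := by
  obtain ⟨ε, hε, hεC⟩ := exists_pos_pow_mul_rpow_lt hn M hC₂
  refine ⟨ε, hε, fun μ x₀ r F hr hμ hF hμF => ?_⟩
  have hFne : F.Nonempty := nonempty_of_measure_ne_zero <|
    ((ENNReal.ofReal_pos.2 (by positivity)).trans_le hμF).ne'
  exact exists_isSpread_of_forall_exists_le_infDist hFne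
    (fun V _ hV hVF => exists_mem_le_infDist_of_le_measure hμ hM.le hε hr hεC hF hμF V hV hVF)
    le_rfl

/-- Existence of `n+2` well-spread points in a set of large measure inside a ball. -/
theorem exists_spread_points (m n : ℕ) (s C₂ M : ℝ)
    (hn : (n : ℝ) < s) (hs : s ≤ n + 1) (hnm : n + 1 ≤ m)
    (hC₂ : 0 < C₂) (hM : 0 < M) :
    ∃ C₃ : ℝ, 0 < C₃ ∧
      ∀ (μ : Measure (EuclideanSpace ℝ (Fin m))) (x₀ : EuclideanSpace ℝ (Fin m))
        (r : ℝ) (F : Set (EuclideanSpace ℝ (Fin m))),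
        0 < r →
        (∀ (x : EuclideanSpace ℝ (Fin m)) (t : ℝ), 0 < t →
          μ (ball x t) ≤ ENNReal.ofReal (M * t ^ s)) →
        F ⊆ ball x₀ r →
        ENNReal.ofReal (C₂ * r ^ s) ≤ μ F →
        ∃ y : Fin (n + 2) → EuclideanSpace ℝ (Fin m),
          (∀ i, y i ∈ F) ∧
          ∀ j : Fin (n + 2), 1 ≤ (j : ℕ) →
            C₃ * r ≤ Metric.infDist (y j)
              ((affineSpan ℝ (y '' {i | (i : ℕ) < (j : ℕ)}) :
                AffineSubspace ℝ (EuclideanSpace ℝ (Fin m))) :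
                Set (EuclideanSpace ℝ (Fin m))) :=
  exists_spread_points_general m n s C₂ M hn hC₂ hM
end

section
/- Let r > 0, let y₀ = 0, y₁, …, y_k ∈ B(0,r) ⊂ ℝ^m be points such that d(y_j, span{y₀,…,y_{j−1}}) ≥ cr for all j = 1,…,k (with span meaning affine span, and d(y₁, {0}) = |y₁| ≥ cr), and let e₁, …, e_k be an orthonormal basis of span{y₁,…,y_k} obtained by Gram–Schmidt (so span{e₁,…,e_j} = span{y₁,…,y_j}). Then for any vector-valued linear map T: ℝ^m → ℝ^m and any 1 ≤ k' ≤ k, |T(e_{k'})| ≤ C(c,k) r^{−1} Σ_{j=1}^{k'} |T(y_j)|, where C(c,k) depends only on c and k. -/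
/-!
Expanding `y j` in the orthonormal family gives
`y j = ∑_{i<j} ⟪e i, y j⟫ e i + ⟪e j, y j⟫ e j`, where the first sum lies in the span of the
earlier points, so `|⟪e j, y j⟫| ≥ c r`, while all coefficients are at most `‖y j‖ < r`.
Applying `T` bounds `c r ‖T (e j)‖` by `‖T (y j)‖ + r ∑_{i<j} ‖T (e i)‖`, and this recursion
is solved by a discrete Grönwall inequality, giving the constant `c⁻¹ (1 + c⁻¹)^k`.
-/

open Metric Set

open scoped RealInnerProductSpace

section GramSchmidt

variable {ι E F : Type*} [NormedAddCommGroup E] [InnerProductSpace ℝ E]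
  [NormedAddCommGroup F] [NormedSpace ℝ F]

theorem Orthonormal.sum_inner_smul_eq_of_mem_span {e : ι → E} (he : Orthonormal ℝ e)
    {s : Finset ι} {x : E} (hx : x ∈ Submodule.span ℝ (e '' s)) :
    ∑ i ∈ s, ⟪e i, x⟫ • e i = x := by
  obtain ⟨l, rfl⟩ := (Submodule.mem_span_image_finset_iff_exists_fun' ℝ).mp hx
  exact Finset.sum_congr rfl fun i hi => by rw [he.inner_right_sum l hi]

theorem Submodule.span_image_Iio_eq_of_span_image_Iic_eq {R M : Type*} [Semiring R]
    [AddCommMonoid M] [Module R M] [Preorder ι] {e y : ι → M}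
    (hspan : ∀ j, Submodule.span R (e '' Iic j) = Submodule.span R (y '' Iic j)) (j : ι) :
    Submodule.span R (e '' Iio j) = Submodule.span R (y '' Iio j) := by
  have hIio : Iio j = ⋃ i ∈ Iio j, Iic i :=
    Subset.antisymm (fun i hi => mem_biUnion hi self_mem_Iic)
      (iUnion₂_subset fun _ hi => Iic_subset_Iio.mpr hi)
  rw [hIio]
  simp only [image_iUnion₂, Submodule.span_iUnion₂, hspan]

variable [LinearOrder ι] [LocallyFiniteOrderBot ι] {e y : ι → E}

theorem Orthonormal.sum_Iio_inner_smul_add_eq (he : Orthonormal ℝ e)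
    (hspan : ∀ j, Submodule.span ℝ (e '' Iic j) = Submodule.span ℝ (y '' Iic j)) (j : ι) :
    ∑ i ∈ Finset.Iio j, ⟪e i, y j⟫ • e i + ⟪e j, y j⟫ • e j = y j := by
  have hy : y j ∈ Submodule.span ℝ (e '' ↑(Finset.Iic j)) := by
    rw [Finset.coe_Iic, hspan j]
    exact Submodule.subset_span (mem_image_of_mem y self_mem_Iic)
  conv_rhs => rw [← he.sum_inner_smul_eq_of_mem_span hy, Finset.Iic_eq_cons_Iio, Finset.sum_cons]
  exact add_comm _ _

theorem Orthonormal.infDist_span_Iio_le (he : Orthonormal ℝ e)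
    (hspan : ∀ j, Submodule.span ℝ (e '' Iic j) = Submodule.span ℝ (y '' Iic j)) (j : ι) :
    infDist (y j) (Submodule.span ℝ (y '' Iio j)) ≤ |⟪e j, y j⟫| := by
  have hmem : ∑ i ∈ Finset.Iio j, ⟪e i, y j⟫ • e i ∈ Submodule.span ℝ (y '' Iio j) := by
    rw [← Submodule.span_image_Iio_eq_of_span_image_Iic_eq hspan]
    exact Submodule.sum_mem _ fun i hi => Submodule.smul_mem _ _
      (Submodule.subset_span (mem_image_of_mem e (Finset.mem_Iio.mp hi)))
  calc infDist (y j) (Submodule.span ℝ (y '' Iio j))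
      ≤ dist (y j) (∑ i ∈ Finset.Iio j, ⟪e i, y j⟫ • e i) := infDist_le_dist_of_mem hmem
    _ = |⟪e j, y j⟫| := by
      rw [dist_eq_norm, sub_eq_of_eq_add' (he.sum_Iio_inner_smul_add_eq hspan j).symm,
        norm_smul, he.norm_eq_one, mul_one, Real.norm_eq_abs]

theorem Orthonormal.infDist_span_Iio_mul_norm_le (he : Orthonormal ℝ e)
    (hspan : ∀ j, Submodule.span ℝ (e '' Iic j) = Submodule.span ℝ (y '' Iic j))
    (T : E →ₗ[ℝ] F) (j : ι) :
    infDist (y j) (Submodule.span ℝ (y '' Iio j)) * ‖T (e j)‖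
      ≤ ‖T (y j)‖ + ‖y j‖ * ∑ i ∈ Finset.Iio j, ‖T (e i)‖ := by
  have hTy : ∑ i ∈ Finset.Iio j, ⟪e i, y j⟫ • T (e i) + ⟪e j, y j⟫ • T (e j) = T (y j) := by
    simpa [map_sum] using congrArg T (he.sum_Iio_inner_smul_add_eq hspan j)
  have hcoef : ∀ i, ‖⟪e i, y j⟫‖ ≤ ‖y j‖ := fun i => by
    simpa [he.norm_eq_one] using norm_inner_le_norm (𝕜 := ℝ) (e i) (y j)
  calc infDist (y j) (Submodule.span ℝ (y '' Iio j)) * ‖T (e j)‖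
      ≤ ‖⟪e j, y j⟫ • T (e j)‖ := by
        rw [norm_smul, Real.norm_eq_abs]
        exact mul_le_mul_of_nonneg_right (he.infDist_span_Iio_le hspan j) (norm_nonneg _)
    _ = ‖T (y j) - ∑ i ∈ Finset.Iio j, ⟪e i, y j⟫ • T (e i)‖ := by rw [← hTy, add_sub_cancel_left]
    _ ≤ ‖T (y j)‖ + ∑ i ∈ Finset.Iio j, ‖⟪e i, y j⟫‖ * ‖T (e i)‖ := by
        refine (norm_sub_le _ _).trans ?_
        gcongr
        exact (norm_sum_le _ _).trans_eq (by simp only [norm_smul])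
    _ ≤ ‖T (y j)‖ + ‖y j‖ * ∑ i ∈ Finset.Iio j, ‖T (e i)‖ := by
        rw [Finset.mul_sum]
        gcongr with i
        exact hcoef i

theorem Orthonormal.norm_apply_le_of_mul_le_infDist (he : Orthonormal ℝ e)
    (hspan : ∀ j, Submodule.span ℝ (e '' Iic j) = Submodule.span ℝ (y '' Iic j))
    (T : E →ₗ[ℝ] F) {c r : ℝ} (hc : 0 < c) (hr : 0 < r) {j : ι} (hyj : ‖y j‖ ≤ r)
    (hdj : c * r ≤ infDist (y j) (Submodule.span ℝ (y '' Iio j))) :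
    ‖T (e j)‖ ≤ ‖T (y j)‖ / (c * r) + c⁻¹ * ∑ i ∈ Finset.Iio j, ‖T (e i)‖ := by
  have key : c * r * ‖T (e j)‖ ≤ ‖T (y j)‖ + r * ∑ i ∈ Finset.Iio j, ‖T (e i)‖ :=
    calc c * r * ‖T (e j)‖ ≤ infDist (y j) (Submodule.span ℝ (y '' Iio j)) * ‖T (e j)‖ := by
          gcongr
      _ ≤ ‖T (y j)‖ + ‖y j‖ * ∑ i ∈ Finset.Iio j, ‖T (e i)‖ :=
          he.infDist_span_Iio_mul_norm_le hspan T j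
      _ ≤ ‖T (y j)‖ + r * ∑ i ∈ Finset.Iio j, ‖T (e i)‖ := by gcongr
  calc ‖T (e j)‖ = c * r * ‖T (e j)‖ / (c * r) := by field_simp
    _ ≤ (‖T (y j)‖ + r * ∑ i ∈ Finset.Iio j, ‖T (e i)‖) / (c * r) := by gcongr
    _ = ‖T (y j)‖ / (c * r) + c⁻¹ * ∑ i ∈ Finset.Iio j, ‖T (e i)‖ := by field_simp

end GramSchmidt

theorem Fin.le_mul_one_add_pow_of_le_add_mul_sum {k : ℕ} {b : Fin k → ℝ} {A K : ℝ} (hK : 0 ≤ K)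
    {n : Fin k} (h : ∀ j ≤ n, b j ≤ A + K * ∑ i ∈ Finset.Iio j, b i) :
    b n ≤ A * (1 + K) ^ (n : ℕ) := by
  induction n using WellFoundedLT.induction with
  | _ n ih =>
  calc b n ≤ A + K * ∑ i ∈ Finset.Iio n, b i := h n le_rfl
    _ ≤ A + K * ∑ i ∈ Finset.Iio n, A * (1 + K) ^ (i : ℕ) := by
        gcongr with i hi
        exact ih i (Finset.mem_Iio.mp hi) fun j hj => h j (hj.trans (Finset.mem_Iio.mp hi).le)
    _ = A * ((∑ t ∈ Finset.range n, (K + 1) ^ t) * K + 1) := by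
        rw [← Nat.Iio_eq_range, ← Fin.map_valEmbedding_Iio, Finset.sum_map, ← Finset.mul_sum]
        simp only [Fin.valEmbedding_apply, add_comm K]
        ring
    _ = A * (1 + K) ^ (n : ℕ) := by rw [geom_sum_mul_add, add_comm K]

/-- Control of a linear map on Gram–Schmidt orthonormal vectors by its values on the
original well-spread points. -/
theorem linear_map_gram_schmidt_bound (k : ℕ) (c : ℝ) (hc : 0 < c) :
    ∃ C : ℝ, 0 < C ∧
      ∀ (m : ℕ) (r : ℝ) (y e : Fin k → EuclideanSpace ℝ (Fin m))
        (T : EuclideanSpace ℝ (Fin m) →ₗ[ℝ] EuclideanSpace ℝ (Fin m)),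
        0 < r →
        (∀ j, y j ∈ ball (0 : EuclideanSpace ℝ (Fin m)) r) →
        (∀ j : Fin k, c * r ≤ Metric.infDist (y j)
            ((Submodule.span ℝ (y '' {i | (i : ℕ) < (j : ℕ)}) :
              Submodule ℝ (EuclideanSpace ℝ (Fin m))) : Set (EuclideanSpace ℝ (Fin m)))) →
        Orthonormal ℝ e →
        (∀ j : Fin k, Submodule.span ℝ (e '' {i | (i : ℕ) ≤ (j : ℕ)})
            = Submodule.span ℝ (y '' {i | (i : ℕ) ≤ (j : ℕ)})) →
        ∀ k' : Fin k, ‖T (e k')‖ ≤ C / r * ∑ j ∈ Finset.Iic k', ‖T (y j)‖ := by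
  refine ⟨c⁻¹ * (1 + c⁻¹) ^ k, by positivity, ?_⟩
  intro m r y e T hr hball hdist he hspan k'
  set S := ∑ j ∈ Finset.Iic k', ‖T (y j)‖
  have hstep : ∀ j ≤ k', ‖T (e j)‖ ≤ S / (c * r) + c⁻¹ * ∑ i ∈ Finset.Iio j, ‖T (e i)‖ := by
    intro j hj
    have hTyj : ‖T (y j)‖ ≤ S := Finset.single_le_sum (f := fun t => ‖T (y t)‖)
      (fun _ _ => norm_nonneg _) (Finset.mem_Iic.mpr hj)
    refine (he.norm_apply_le_of_mul_le_infDist hspan T hc hr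
      (mem_ball_zero_iff.mp (hball j)).le (hdist j)).trans ?_
    gcongr
  calc ‖T (e k')‖ ≤ S / (c * r) * (1 + c⁻¹) ^ (k' : ℕ) :=
        Fin.le_mul_one_add_pow_of_le_add_mul_sum (by positivity) hstep
    _ ≤ c⁻¹ * (1 + c⁻¹) ^ k / r * S := by
        rw [show S / (c * r) * (1 + c⁻¹) ^ (k' : ℕ) = c⁻¹ * (1 + c⁻¹) ^ (k' : ℕ) / r * S by
          field_simp]
        gcongr
        · exact le_add_of_nonneg_right (by positivity)
        · exact k'.isLt.le
end

section
/- Let μ be a finite Borel measure on ℝ^m, s > 0, x ∈ ℝ^m with μ({x}) = 0, and suppose sup_{ε>0} |R^s_ε μ(x)| < ∞ and lim_{ε→0} R^s_ε μ(x) exists. Let φ be as above (C², φ(t) = t^{(s+1)/2} on [0,1], compactly supported, with ∫|φ'| < ∞ and ∫_0^∞ φ'(t) dt finite). Then lim_{ε→0} R^s_{φ,ε} μ(x) also exists, where R^s_{φ,ε}μ(x) = ∫ φ(|x−y|²/ε²)(x−y)/|x−y|^{s+1} dμ(y). -/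
/-! Writing `φ u = ∫₀ᵘ φ'` and applying Fubini expresses the smooth truncation as an average of
sharp ones: `R_{φ,ε} μ(x) = ∫₀^∞ φ'(t) R_{ε√t} μ(x) dt`. Fubini applies because `|K(z)| = |z|^{-s}`,
so on the region `|x - y| > ε√t` the integrand is at most `ε^{-s} |φ'(t)| t^{-s/2}`, which is
integrable since `φ'(t) = ((s+1)/2) t^{(s-1)/2}` near `0`. The uniform bound on `R_η μ(x)` then lets
dominated convergence carry the limit of `R_η μ(x)` through the `t`-integral. -/

open MeasureTheory Metric Set Filter Topology

noncomputable section

section Profile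

variable {φ : ℝ → ℝ} {p : ℝ}

theorem continuousWithinAt_zero_of_eqOn_rpow (hp : 0 < p)
    (hφ : ∀ t ∈ Icc (0 : ℝ) 1, φ t = t ^ p) : ContinuousWithinAt φ (Ici 0) 0 := by
  have hrpow : ContinuousWithinAt (fun t : ℝ => t ^ p) (Ici 0) 0 :=
    (Real.continuousAt_rpow_const 0 p (Or.inr hp.le)).continuousWithinAt
  refine hrpow.congr_of_eventuallyEq ?_ (hφ 0 ⟨le_rfl, zero_le_one⟩)
  filter_upwards [Icc_mem_nhdsGE zero_lt_one] with t ht using hφ t ht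

theorem integral_Ioc_deriv_eq_sub (hφ0 : ContinuousWithinAt φ (Ici 0) 0)
    (hφ : DifferentiableOn ℝ φ (Ioi 0)) (hφ' : IntegrableOn (deriv φ) (Ioi 0)) {u : ℝ}
    (hu : 0 ≤ u) : ∫ t in Ioc 0 u, deriv φ t = φ u - φ 0 := by
  have hcont : ContinuousOn φ (Icc 0 u) := by
    intro t ht
    rcases ht.1.eq_or_lt with rfl | ht0
    · exact hφ0.mono Icc_subset_Ici_self
    · exact (hφ.continuousOn.continuousAt (Ioi_mem_nhds ht0)).continuousWithinAt
  have hderiv : ∀ t ∈ Ioo 0 u, HasDerivWithinAt φ (deriv φ t) (Ioi t) t := fun t ht =>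
    ((hφ t ht.1).differentiableAt (Ioi_mem_nhds ht.1)).hasDerivAt.hasDerivWithinAt
  have hint : IntervalIntegrable (deriv φ) volume 0 u :=
    (intervalIntegrable_iff_integrableOn_Ioc_of_le hu).mpr (hφ'.mono_set Ioc_subset_Ioi_self)
  rw [← intervalIntegral.integral_of_le hu]
  exact intervalIntegral.integral_eq_sub_of_hasDeriv_right_of_le hu hcont hderiv hint

theorem integrableOn_abs_deriv_mul_rpow {q : ℝ} (hφ : ∀ t ∈ Icc (0 : ℝ) 1, φ t = t ^ p)
    (hpq : 0 < p + q) (hq : q ≤ 0) (hφ' : IntegrableOn (fun t => |deriv φ t|) (Ioi 0)) :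
    IntegrableOn (fun t => |deriv φ t| * t ^ q) (Ioi 0) := by
  rw [← Ioo_union_Ici_eq_Ioi zero_lt_one]
  refine IntegrableOn.union ?_ ?_
  · have hderiv : ∀ t ∈ Ioo (0 : ℝ) 1, deriv φ t = p * t ^ (p - 1) := fun t ht => by
      have hev : φ =ᶠ[𝓝 t] fun r => r ^ p := by
        filter_upwards [Ioo_mem_nhds ht.1 ht.2] with r hr using hφ r ⟨hr.1.le, hr.2.le⟩
      rw [hev.deriv_eq, Real.deriv_rpow_const]
    have hpow : IntegrableOn (fun t : ℝ => |p| * t ^ (p + q - 1)) (Ioo 0 1) :=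
      IntegrableOn.mono_set (((intervalIntegrable_iff_integrableOn_Ioc_of_le zero_le_one).mp
        (intervalIntegral.intervalIntegrable_rpow' (by linarith))).const_mul _)
          Ioo_subset_Ioc_self
    refine hpow.congr_fun (fun t ht => ?_) measurableSet_Ioo
    rw [hderiv t ht, abs_mul, abs_of_nonneg (Real.rpow_nonneg ht.1.le _), mul_assoc,
      ← Real.rpow_add ht.1, sub_add_eq_add_sub, add_sub_right_comm]
  · refine Integrable.mono' (hφ'.mono_set (Ici_subset_Ioi.mpr zero_lt_one))
      (((measurable_deriv φ).abs.mul (by fun_prop)).aestronglyMeasurable) ?_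
    filter_upwards [ae_restrict_mem measurableSet_Ici] with t (ht : 1 ≤ t)
    rw [Real.norm_eq_abs, abs_mul, abs_abs, abs_of_nonneg (Real.rpow_nonneg (by linarith) _)]
    exact mul_le_of_le_one_right (abs_nonneg _) (Real.rpow_le_one_of_one_le_of_nonpos ht hq)

end Profile

section LayerCake

variable {X E : Type*} [MeasurableSpace X] [NormedAddCommGroup E] [NormedSpace ℝ E]
  {μ : Measure X} [SFinite μ] {f : X → E} {r : X → ℝ}

theorem stronglyMeasurable_setIntegral_lt (hf : StronglyMeasurable f) (hr : Measurable r) :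
    StronglyMeasurable fun η : ℝ => ∫ y in {y | η < r y}, f y ∂μ := by
  have hF : StronglyMeasurable ({p : ℝ × X | p.1 < r p.2}.indicator fun p => f p.2) :=
    (hf.comp_measurable measurable_snd).indicator
      (measurableSet_lt measurable_fst (hr.comp measurable_snd))
  convert hF.integral_prod_right' (ν := μ) using 2 with η
  rw [← integral_indicator (measurableSet_lt measurable_const hr)]
  rfl

theorem integral_integral_Ioc_smul_eq [CompleteSpace E] {g : ℝ → ℝ} (hr : Measurable r)
    (hint : Integrable ({p : X × ℝ | p.2 < r p.1}.indicator fun p => g p.2 • f p.1)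
      (μ.prod (volume.restrict (Ioi 0)))) :
    ∫ y, (∫ t in Ioc 0 (r y), g t) • f y ∂μ =
      ∫ t in Ioi 0, g t • ∫ y in {y | t < r y}, f y ∂μ := by
  have hslice_t : ∀ y, ∫ t in Ioi 0, {p : X × ℝ | p.2 < r p.1}.indicator
      (fun p => g p.2 • f p.1) (y, t) = (∫ t in Ioc 0 (r y), g t) • f y := fun y => by
    rw [← integral_smul_const, integral_Ioc_eq_integral_Ioo, ← Ioi_inter_Iio,
      ← setIntegral_indicator measurableSet_Iio]
    rfl
  have hslice_y : ∀ t, ∫ y, {p : X × ℝ | p.2 < r p.1}.indicator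
      (fun p => g p.2 • f p.1) (y, t) ∂μ = g t • ∫ y in {y | t < r y}, f y ∂μ := fun t => by
    rw [← integral_smul, ← integral_indicator (measurableSet_lt measurable_const hr)]
    rfl
  simp only [← hslice_t, ← hslice_y]
  exact integral_integral_swap hint

end LayerCake

theorem mul_sqrt_rpow_neg {s ε t : ℝ} (hε : 0 ≤ ε) (ht : 0 ≤ t) :
    (ε * √t) ^ (-s) = ε ^ (-s) * t ^ (-s / 2) := by
  rw [Real.mul_rpow hε (Real.sqrt_nonneg t), Real.sqrt_eq_rpow, ← Real.rpow_mul ht]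
  ring_nf

theorem lt_sq_div_sq_iff_mul_sqrt_lt {t ε d : ℝ} (ht : 0 ≤ t) (hε : 0 < ε) (hd : 0 ≤ d) :
    t < d ^ 2 / ε ^ 2 ↔ ε * √t < d := by
  rw [lt_div_iff₀ (by positivity), ← sq_lt_sq₀ (by positivity) hd, mul_pow, Real.sq_sqrt ht,
    mul_comm]

section Riesz

variable {E : Type*} [NormedAddCommGroup E] [NormedSpace ℝ E]

def rieszKernel (s : ℝ) (x y : E) : E := (dist x y ^ (s + 1))⁻¹ • (x - y)

def truncatedRiesz [MeasurableSpace E] (s : ℝ) (μ : Measure E) (x : E) (η : ℝ) : E :=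
  ∫ y in {y | η < dist x y}, rieszKernel s x y ∂μ

def smoothTruncatedRiesz [MeasurableSpace E] (s : ℝ) (μ : Measure E) (φ : ℝ → ℝ) (x : E)
    (ε : ℝ) : E :=
  ∫ y, φ (dist x y ^ 2 / ε ^ 2) • rieszKernel s x y ∂μ

theorem norm_rieszKernel {s : ℝ} {x y : E} (hxy : x ≠ y) :
    ‖rieszKernel s x y‖ = dist x y ^ (-s) := by
  have hd : 0 < dist x y := dist_pos.mpr hxy
  rw [rieszKernel, norm_smul, norm_inv, Real.norm_of_nonneg (Real.rpow_nonneg hd.le _),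
    ← dist_eq_norm, Real.rpow_add_one hd.ne', Real.rpow_neg hd.le, mul_inv,
    inv_mul_cancel_right₀ hd.ne']

variable [MeasurableSpace E] [BorelSpace E] [SecondCountableTopology E]

theorem measurable_rieszKernel (s : ℝ) (x : E) : Measurable (rieszKernel s x) := by
  unfold rieszKernel
  fun_prop

theorem stronglyMeasurable_truncatedRiesz (s : ℝ) (μ : Measure E) [SFinite μ] (x : E) :
    StronglyMeasurable (truncatedRiesz s μ x) :=
  stronglyMeasurable_setIntegral_lt (measurable_rieszKernel s x).stronglyMeasurable
    (measurable_const.dist measurable_id)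

variable {μ : Measure E} [IsFiniteMeasure μ] {s ε : ℝ} {g : ℝ → ℝ}

theorem integrable_indicator_smul_rieszKernel (hs : 0 ≤ s) (hε : 0 < ε) (x : E)
    (hg : Measurable g) (hgs : IntegrableOn (fun t => |g t| * t ^ (-s / 2)) (Ioi 0)) :
    Integrable ({p : E × ℝ | p.2 < dist x p.1 ^ 2 / ε ^ 2}.indicator
      fun p => g p.2 • rieszKernel s x p.1) (μ.prod (volume.restrict (Ioi 0))) := by
  refine Integrable.mono' ((hgs.const_mul (ε ^ (-s))).comp_snd μ) ?_ ?_
  · exact (((hg.comp measurable_snd).smul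
      ((measurable_rieszKernel s x).comp measurable_fst)).indicator
        (measurableSet_lt measurable_snd (by fun_prop))).aestronglyMeasurable
  · filter_upwards [Measure.quasiMeasurePreserving_snd.ae (ae_restrict_mem measurableSet_Ioi)]
      with ⟨y, t⟩ (ht : 0 < t)
    by_cases hyt : t < dist x y ^ 2 / ε ^ 2
    · have hlt : ε * √t < dist x y :=
        (lt_sq_div_sq_iff_mul_sqrt_lt ht.le hε dist_nonneg).mp hyt
      have hpos : 0 < ε * √t := mul_pos hε (Real.sqrt_pos.mpr ht)
      rw [indicator_of_mem (show (y, t) ∈ _ from hyt), norm_smul,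
        norm_rieszKernel (dist_pos.mp (hpos.trans hlt)), Real.norm_eq_abs, mul_left_comm,
        ← mul_sqrt_rpow_neg hε.le ht.le]
      exact mul_le_mul_of_nonneg_left
        (Real.rpow_le_rpow_of_nonpos hpos hlt.le (neg_nonpos.mpr hs)) (abs_nonneg _)
    · rw [indicator_of_notMem (show (y, t) ∉ _ from hyt), norm_zero]
      have := Real.rpow_nonneg ht.le (-s / 2)
      positivity

theorem smoothTruncatedRiesz_eq_integral_smul_truncatedRiesz [CompleteSpace E] (hs : 0 ≤ s)
    (hε : 0 < ε) (x : E) {φ : ℝ → ℝ} (hg : Measurable g)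
    (hφ : ∀ u, 0 ≤ u → ∫ t in Ioc 0 u, g t = φ u)
    (hgs : IntegrableOn (fun t => |g t| * t ^ (-s / 2)) (Ioi 0)) :
    smoothTruncatedRiesz s μ φ x ε = ∫ t in Ioi 0, g t • truncatedRiesz s μ x (ε * √t) := by
  have hr : Measurable fun y => dist x y ^ 2 / ε ^ 2 := by fun_prop
  have hsets : ∀ t, 0 < t →
      {y | t < dist x y ^ 2 / ε ^ 2} = {y | ε * √t < dist x y} := fun t ht => by
    ext y
    exact lt_sq_div_sq_iff_mul_sqrt_lt ht.le hε dist_nonneg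
  simp_rw [smoothTruncatedRiesz, ← hφ _ (by positivity : 0 ≤ dist x _ ^ 2 / ε ^ 2)]
  rw [integral_integral_Ioc_smul_eq hr
    (integrable_indicator_smul_rieszKernel hs hε x hg hgs)]
  refine setIntegral_congr_fun measurableSet_Ioi fun t ht => ?_
  simp only [truncatedRiesz, hsets t ht]

end Riesz

theorem tendsto_integral_smul_comp_mul_sqrt {E : Type*} [NormedAddCommGroup E]
    [NormedSpace ℝ E] [CompleteSpace E] {R : ℝ → E} {g : ℝ → ℝ} {B : ℝ} {L : E}
    (hR : StronglyMeasurable R) (hRB : ∀ η, 0 < η → ‖R η‖ ≤ B)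
    (hRL : Tendsto R (𝓝[>] 0) (𝓝 L)) (hg : IntegrableOn g (Ioi 0)) :
    Tendsto (fun ε => ∫ t in Ioi 0, g t • R (ε * √t)) (𝓝[>] 0)
      (𝓝 ((∫ t in Ioi 0, g t) • L)) := by
  rw [← integral_smul_const]
  refine tendsto_integral_filter_of_dominated_convergence (fun t => ‖g t‖ * B)
    (Eventually.of_forall fun ε => hg.aestronglyMeasurable.smul
      (hR.comp_measurable (by fun_prop)).aestronglyMeasurable) ?_ (hg.norm.mul_const B) ?_
  · filter_upwards [self_mem_nhdsWithin] with ε (hε : 0 < ε)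
    filter_upwards [ae_restrict_mem measurableSet_Ioi] with t (ht : 0 < t)
    rw [norm_smul]
    exact mul_le_mul_of_nonneg_left (hRB _ (mul_pos hε (Real.sqrt_pos.mpr ht))) (norm_nonneg _)
  · filter_upwards [ae_restrict_mem measurableSet_Ioi] with t (ht : 0 < t)
    refine tendsto_const_nhds.smul (hRL.comp (tendsto_nhdsWithin_iff.mpr ⟨?_, ?_⟩))
    · simpa using ((continuous_mul_const √t).tendsto 0).mono_left nhdsWithin_le_nhds
    · filter_upwards [self_mem_nhdsWithin] with ε (hε : 0 < ε)
      exact mul_pos hε (Real.sqrt_pos.mpr ht)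

end

theorem smooth_pv_exists_of_pv_exists_general (m : ℕ) (s : ℝ) (hs : 0 < s)
    (μ : Measure (EuclideanSpace ℝ (Fin m))) [IsFiniteMeasure μ]
    (φ : ℝ → ℝ) (x : EuclideanSpace ℝ (Fin m))
    (hbound : ∃ B : ℝ, ∀ η : ℝ, 0 < η →
      ‖∫ y in {y : EuclideanSpace ℝ (Fin m) | η < dist x y},
          (dist x y ^ (s + 1))⁻¹ • (x - y) ∂μ‖ ≤ B)
    (hlim : ∃ L : EuclideanSpace ℝ (Fin m),
      Tendsto (fun η : ℝ =>
          ∫ y in {y : EuclideanSpace ℝ (Fin m) | η < dist x y},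
            (dist x y ^ (s + 1))⁻¹ • (x - y) ∂μ)
        (nhdsWithin 0 (Ioi 0)) (nhds L))
    (hφdiff : ContDiffOn ℝ 2 φ (Ioi 0))
    (hφeq : ∀ t ∈ Icc (0 : ℝ) 1, φ t = t ^ ((s + 1) / 2))
    (hφ'int : IntegrableOn (fun t => |deriv φ t|) (Ioi (0 : ℝ))) :
    ∃ L' : EuclideanSpace ℝ (Fin m),
      Tendsto (fun ε : ℝ =>
          ∫ y, φ (dist x y ^ 2 / ε ^ 2) • ((dist x y ^ (s + 1))⁻¹ • (x - y)) ∂μ)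
        (nhdsWithin 0 (Ioi 0)) (nhds L') := by
  obtain ⟨B, hB⟩ := hbound
  obtain ⟨L, hL⟩ := hlim
  have hp : 0 < (s + 1) / 2 := by positivity
  have hφ' : IntegrableOn (deriv φ) (Ioi 0) :=
    (integrable_norm_iff (measurable_deriv φ).aestronglyMeasurable).mp
      (by simpa only [Real.norm_eq_abs] using hφ'int.integrable)
  have hprimitive : ∀ u, 0 ≤ u → ∫ t in Ioc 0 u, deriv φ t = φ u := fun u hu => by
    rw [integral_Ioc_deriv_eq_sub (continuousWithinAt_zero_of_eqOn_rpow hp hφeq)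
      (hφdiff.differentiableOn two_ne_zero) hφ' hu, hφeq 0 ⟨le_rfl, zero_le_one⟩,
      Real.zero_rpow hp.ne', sub_zero]
  have hφs : IntegrableOn (fun t => |deriv φ t| * t ^ (-s / 2)) (Ioi 0) :=
    integrableOn_abs_deriv_mul_rpow hφeq (by linarith) (by linarith) hφ'int
  refine ⟨(∫ t in Ioi 0, deriv φ t) • L, ?_⟩
  refine (tendsto_integral_smul_comp_mul_sqrt (stronglyMeasurable_truncatedRiesz s μ x) hB hL
    hφ').congr' ?_
  filter_upwards [self_mem_nhdsWithin] with ε (hε : 0 < ε)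
  exact (smoothTruncatedRiesz_eq_integral_smul_truncatedRiesz hs.le hε x (measurable_deriv φ)
    hprimitive hφs).symm

/-- If the principal value of the truncated Riesz transform exists at `x` (and the
truncations are uniformly bounded), then the principal value of the smoothly truncated
Riesz transform also exists at `x`. -/
theorem smooth_pv_exists_of_pv_exists (m : ℕ) (s C Cρ : ℝ) (hs : 0 < s)
    (μ : Measure (EuclideanSpace ℝ (Fin m))) [IsFiniteMeasure μ]
    (φ : ℝ → ℝ) (x : EuclideanSpace ℝ (Fin m))
    (hatom : μ {x} = 0)
    (hbound : ∃ B : ℝ, ∀ η : ℝ, 0 < η →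
      ‖∫ y in {y : EuclideanSpace ℝ (Fin m) | η < dist x y},
          (dist x y ^ (s + 1))⁻¹ • (x - y) ∂μ‖ ≤ B)
    (hlim : ∃ L : EuclideanSpace ℝ (Fin m),
      Tendsto (fun η : ℝ =>
          ∫ y in {y : EuclideanSpace ℝ (Fin m) | η < dist x y},
            (dist x y ^ (s + 1))⁻¹ • (x - y) ∂μ)
        (nhdsWithin 0 (Ioi 0)) (nhds L))
    (hφdiff : ContDiffOn ℝ 2 φ (Ioi 0))
    (hφeq : ∀ t ∈ Icc (0 : ℝ) 1, φ t = t ^ ((s + 1) / 2))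
    (hφsupp : HasCompactSupport φ)
    (hφbd : ∀ t : ℝ, |φ t| ≤ C)
    (hφ'int : IntegrableOn (fun t => |deriv φ t|) (Ioi (0 : ℝ))) :
    ∃ L' : EuclideanSpace ℝ (Fin m),
      Tendsto (fun ε : ℝ =>
          ∫ y, φ (dist x y ^ 2 / ε ^ 2) • ((dist x y ^ (s + 1))⁻¹ • (x - y)) ∂μ)
        (nhdsWithin 0 (Ioi 0)) (nhds L') :=
  smooth_pv_exists_of_pv_exists_general m s hs μ φ x hbound hlim hφdiff hφeq hφ'int
end

section
/- Pigeonhole doubling lemma: let s > 0, ρ > 0, 0 < c ≤ M < ∞, and let θ: (0,∞) → [0,∞) be defined by θ(t) = μ(B(0,t))/t^s for a measure μ satisfying θ(t) ≤ M for all t and θ(ε₁) ≥ c for some ε₁ > 0. Then there exists ω₀ = ω₀(s, ρ, M, c) ≥ 1 and ε with ε₁ ≤ ε ≤ ω₀ ε₁ such that θ(ε) ≥ c/2 and θ(t) ≤ (1+ρ²) θ(ε) for all t ∈ [ε, 4ε]. -/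
/-!
If no scale in `[ε₁, r ^ k * ε₁]` is good (`c ≤ θ ε` and `θ ≤ a * θ ε` on `[ε, r * ε]`), then
starting from `ε₁` one can jump `k` times, each time by a factor at most `r` in the radius, to a
point where `θ` has grown by the factor `a` each time. As `θ ≤ M`, this is impossible as soon as
`M < a ^ k * c`, so `k` depends only on `a`, `c` and `M`.
-/

open MeasureTheory Metric Set

section GoodScale

variable {θ : ℝ → ℝ} {a r c M ε₁ : ℝ}

theorem exists_good_scale_or_growth (ha : 1 ≤ a) (hr : 1 ≤ r) (hε₁ : 0 ≤ ε₁) (hc : 0 ≤ c)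
    (hθ : c ≤ θ ε₁) (k : ℕ) :
    (∃ ε ∈ Icc ε₁ (r ^ k * ε₁), c ≤ θ ε ∧ ∀ t ∈ Icc ε (r * ε), θ t ≤ a * θ ε) ∨
      ∃ t ∈ Icc ε₁ (r ^ k * ε₁), a ^ k * c ≤ θ t := by
  induction k with
  | zero => exact Or.inr ⟨ε₁, by simp, by simpa using hθ⟩
  | succ k ih =>
    have hmono : r ^ k * ε₁ ≤ r ^ (k + 1) * ε₁ :=
      mul_le_mul_of_nonneg_right (pow_le_pow_right₀ hr k.le_succ) hε₁
    rcases ih with ⟨ε, hε, hcε, hgood⟩ | ⟨t, ht, hgrowth⟩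
    · exact Or.inl ⟨ε, ⟨hε.1, hε.2.trans hmono⟩, hcε, hgood⟩
    by_cases hgood : ∀ u ∈ Icc t (r * t), θ u ≤ a * θ t
    · exact Or.inl ⟨t, ⟨ht.1, ht.2.trans hmono⟩,
        (le_mul_of_one_le_left hc (one_le_pow₀ ha)).trans hgrowth, hgood⟩
    push Not at hgood
    obtain ⟨u, hu, hjump⟩ := hgood
    refine Or.inr ⟨u, ⟨ht.1.trans hu.1, ?_⟩, ?_⟩
    · calc u ≤ r * t := hu.2
        _ ≤ r * (r ^ k * ε₁) := mul_le_mul_of_nonneg_left ht.2 (by linarith)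
        _ = r ^ (k + 1) * ε₁ := by ring
    · calc a ^ (k + 1) * c = a * (a ^ k * c) := by ring
        _ ≤ a * θ t := mul_le_mul_of_nonneg_left hgrowth (by linarith)
        _ ≤ θ u := hjump.le

theorem exists_good_scale_of_le (ha : 1 ≤ a) (hr : 1 ≤ r) (hε₁ : 0 ≤ ε₁) (hc : 0 ≤ c)
    (hθ : c ≤ θ ε₁) (hM : ∀ t ≥ ε₁, θ t ≤ M) {N : ℕ} (hN : M < a ^ N * c) :
    ∃ ε ∈ Icc ε₁ (r ^ N * ε₁), c ≤ θ ε ∧ ∀ t ∈ Icc ε (r * ε), θ t ≤ a * θ ε :=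
  (exists_good_scale_or_growth ha hr hε₁ hc hθ N).resolve_right
    fun ⟨t, ht, hgrowth⟩ => (hM t ht.1).not_gt (hN.trans_le hgrowth)

end GoodScale

theorem density_doubling_scale_general (s ρ c M : ℝ) (hρ : 0 < ρ)
    (hc : 0 < c) :
    ∃ ω₀ : ℝ, 1 ≤ ω₀ ∧
      ∀ (m : ℕ) (μ : Measure (EuclideanSpace ℝ (Fin m))) (ε₁ : ℝ), 0 < ε₁ →
        (∀ t : ℝ, 0 < t →
          (μ (ball (0 : EuclideanSpace ℝ (Fin m)) t)).toReal / t ^ s ≤ M) →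
        c ≤ (μ (ball (0 : EuclideanSpace ℝ (Fin m)) ε₁)).toReal / ε₁ ^ s →
        ∃ ε : ℝ, ε₁ ≤ ε ∧ ε ≤ ω₀ * ε₁ ∧
          c / 2 ≤ (μ (ball (0 : EuclideanSpace ℝ (Fin m)) ε)).toReal / ε ^ s ∧
          ∀ t ∈ Icc ε (4 * ε),
            (μ (ball (0 : EuclideanSpace ℝ (Fin m)) t)).toReal / t ^ s
              ≤ (1 + ρ ^ 2) *
                ((μ (ball (0 : EuclideanSpace ℝ (Fin m)) ε)).toReal / ε ^ s) := by
  have hgrowth : (1 : ℝ) < 1 + ρ ^ 2 := by nlinarith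
  obtain ⟨N, hN⟩ := pow_unbounded_of_one_lt (M / c) hgrowth
  refine ⟨4 ^ N, one_le_pow₀ (by norm_num), fun m μ ε₁ hε₁ hM hθ ↦ ?_⟩
  obtain ⟨ε, hε, hcε, hgood⟩ :=
    exists_good_scale_of_le (θ := fun t ↦ (μ (ball 0 t)).toReal / t ^ s) (r := 4)
      hgrowth.le (by norm_num) hε₁.le hc.le hθ (fun t ht ↦ hM t (hε₁.trans_le ht))
      (N := N) (by rwa [div_lt_iff₀ hc] at hN)
  exact ⟨ε, hε.1, hε.2, (half_le_self hc.le).trans hcε, hgood⟩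

/-- Pigeonhole doubling lemma for the average density `θ(t) = μ(B(0,t))/t^s`. -/
theorem density_doubling_scale (s ρ c M : ℝ) (hs : 0 < s) (hρ : 0 < ρ)
    (hc : 0 < c) (hcM : c ≤ M) :
    ∃ ω₀ : ℝ, 1 ≤ ω₀ ∧
      ∀ (m : ℕ) (μ : Measure (EuclideanSpace ℝ (Fin m))) (ε₁ : ℝ), 0 < ε₁ →
        (∀ t : ℝ, 0 < t →
          (μ (ball (0 : EuclideanSpace ℝ (Fin m)) t)).toReal / t ^ s ≤ M) →
        c ≤ (μ (ball (0 : EuclideanSpace ℝ (Fin m)) ε₁)).toReal / ε₁ ^ s →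
        ∃ ε : ℝ, ε₁ ≤ ε ∧ ε ≤ ω₀ * ε₁ ∧
          c / 2 ≤ (μ (ball (0 : EuclideanSpace ℝ (Fin m)) ε)).toReal / ε ^ s ∧
          ∀ t ∈ Icc ε (4 * ε),
            (μ (ball (0 : EuclideanSpace ℝ (Fin m)) t)).toReal / t ^ s
              ≤ (1 + ρ ^ 2) *
                ((μ (ball (0 : EuclideanSpace ℝ (Fin m)) ε)).toReal / ε ^ s) :=
  density_doubling_scale_general s ρ c M hρ hc
end

section
/- Error bound in the Taylor lemma: under the assumptions that μ is a Borel measure on ℝ^m with μ(B(0,t)) ≤ 2θ t^s for small t, that φ is as specified (φ(t) = t^{(s+1)/2} on [0,1], supp φ ⊂ [0,3], |φ| ≤ C, |φ'| ≤ 1/ρ, |φ''| ≤ C_ρ), and that |x| < ε/4, we have R^s_{φ,ε}μ(x) − R^s_{φ,ε}μ(0) = T^ε(x) + E(x), where T^ε(x) = ∫ |y|^{−(s+1)} [ φ(|y|²/ε²)(x − (s+1)(x·y)y/|y|²) + φ'(|y|²/ε²)·2(x·y)y/ε² ] dμ(y) is linear in x, and |E(x)| ≤ C₁ θ^s(3ε)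 |x|²/ε², with θ^s(3ε) = μ(B(0,3ε))/(3ε)^s and C₁ depending only on s, m, ρ, C, C_ρ. -/
/-!
The kernel `φ(|v|²/ε²) |v|^{-(s+1)} v` is a radial field `ψ(|v|²) v`, and the linearization is its
derivative at `-y` in the direction `x`. For `|y| ≤ ε/2` the whole segment from `-y` to `x - y` lies
in the ball `|v| ≤ ε`, where `φ(t) = t^{(s+1)/2}` makes `ψ` constant and the field linear, so the
remainder vanishes. For `|y| > ε/2` the segment stays at distance `≥ ε/4` from the origin, so the
second-order Taylor estimate along it bounds the remainder by `|x|² ε^{-(s+2)}` up to a constant,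
and by `0` once `|y| ≥ 3ε`, where `φ` and its derivatives vanish. The growth bound on `μ` gives
`μ {0} = 0`, so integrating the pointwise bound over `B(0, 3ε)` gives the claim.
-/

open MeasureTheory Metric Set Filter
open scoped RealInnerProductSpace Topology

noncomputable section

theorem norm_sub_sub_deriv_le_of_norm_deriv2_le {E : Type*} [NormedAddCommGroup E]
    [NormedSpace ℝ E] {f f' f'' : ℝ → E} {M : ℝ}
    (hf : ∀ t ∈ Icc (0 : ℝ) 1, HasDerivAt f (f' t) t)
    (hf' : ∀ t ∈ Icc (0 : ℝ) 1, HasDerivAt f' (f'' t) t)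
    (hM : ∀ t ∈ Icc (0 : ℝ) 1, ‖f'' t‖ ≤ M) :
    ‖f 1 - f 0 - f' 0‖ ≤ M := by
  have hM0 : 0 ≤ M := (norm_nonneg _).trans (hM 0 (left_mem_Icc.2 zero_le_one))
  have hf'_sub : ∀ t ∈ Icc (0 : ℝ) 1, ‖f' t - f' 0‖ ≤ M * (t - 0) :=
    norm_image_sub_le_of_norm_deriv_le_segment' (fun t ht => (hf' t ht).hasDerivWithinAt)
      (fun t ht => hM t (Ico_subset_Icc_self ht))
  -- the mean value inequality once more, for `f t - t • f' 0`
  have h := norm_image_sub_le_of_norm_deriv_le_segment' (C := M)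
    (f := fun t => f t - t • f' 0) (f' := fun t => f' t - f' 0)
    (fun t ht =>
      ((hf t ht).sub (by simpa using (hasDerivAt_id t).smul_const (f' 0))).hasDerivWithinAt)
    (fun t ht => (hf'_sub t (Ico_subset_Icc_self ht)).trans
      (mul_le_of_le_one_right hM0 (by linarith [ht.2.le, ht.1])))
    1 (right_mem_Icc.2 zero_le_one)
  simpa [sub_right_comm] using h

theorem deriv_eq_zero_of_forall_gt {f : ℝ → ℝ} {a t : ℝ} (hf : ∀ u, a < u → f u = 0)
    (ht : a < t) : deriv f t = 0 := by
  have h : f =ᶠ[𝓝 t] fun _ => 0 := eventually_of_mem (Ioi_mem_nhds ht) hf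
  rw [h.deriv_eq, deriv_const]

theorem hasDerivAt_comp_div_const {f : ℝ → ℝ} {c x : ℝ} (hf : DifferentiableAt ℝ f (x / c)) :
    HasDerivAt (fun x => f (x / c)) (deriv f (x / c) / c) x :=
  (hf.hasDerivAt.comp x ((hasDerivAt_id x).div_const c)).congr_deriv (by simp [div_eq_mul_inv])

theorem sq_rpow_neg_half {a : ℝ} (ha : 0 ≤ a) (r : ℝ) : (a ^ 2) ^ (-(r / 2)) = (a ^ r)⁻¹ := by
  rw [Real.rpow_neg (by positivity), ← Real.rpow_natCast, ← Real.rpow_mul ha, Nat.cast_ofNat,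
    mul_div_cancel₀ r two_ne_zero]

theorem measure_singleton_eq_zero_of_measure_ball_le {X : Type*} [PseudoMetricSpace X]
    [MeasurableSpace X] {μ : Measure X} {z : X} {c s r₀ : ℝ} (hs : 0 < s) (hr₀ : 0 < r₀)
    (hball : ∀ t : ℝ, 0 < t → t ≤ r₀ → μ (ball z t) ≤ ENNReal.ofReal (c * t ^ s)) :
    μ {z} = 0 := by
  have hlim : Tendsto (fun t : ℝ => ENNReal.ofReal (c * t ^ s)) (𝓝[>] 0) (𝓝 0) := by
    have h := ((continuousAt_const.mul (Real.continuousAt_rpow_const 0 s (Or.inr hs.le))).tendsto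
      (f := fun t : ℝ => c * t ^ s)).mono_left (nhdsWithin_le_nhds (s := Ioi 0))
    simpa [Real.zero_rpow hs.ne'] using ENNReal.tendsto_ofReal h
  refine le_antisymm (ge_of_tendsto hlim ?_) zero_le
  filter_upwards [Ioc_mem_nhdsGT hr₀] with t ht
  exact (measure_mono (singleton_subset_iff.2 (mem_ball_self ht.1))).trans (hball t ht.1 ht.2)

theorem aestronglyMeasurable_of_continuousOn_compl_singleton {X E : Type*}
    [TopologicalSpace X] [SecondCountableTopology X] [MeasurableSpace X] [OpensMeasurableSpace X]
    [T1Space X] [TopologicalSpace E] [TopologicalSpace.PseudoMetrizableSpace E]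
    {μ : Measure X} {f : X → E} {z : X} (hf : ContinuousOn f {z}ᶜ) (hz : μ {z} = 0) :
    AEStronglyMeasurable f μ := by
  have hμ : μ.restrict {z}ᶜ = μ := Measure.restrict_eq_self_of_ae_mem (compl_mem_ae_iff.2 hz)
  simpa [hμ] using hf.aestronglyMeasurable (μ := μ) (measurableSet_singleton z).compl

theorem norm_integral_sub_sub_le {X E : Type*} [MeasurableSpace X] [NormedAddCommGroup E]
    [NormedSpace ℝ E] {μ : Measure X} [IsFiniteMeasure μ] {f g h : X → E} {S : Set X} {M : ℝ}
    (hf : Integrable f μ) (hg : Integrable g μ) (hh : AEStronglyMeasurable h μ)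
    (hS : MeasurableSet S) (hfgh : ∀ᵐ y ∂μ, ‖f y - g y - h y‖ ≤ S.indicator (fun _ => M) y) :
    ‖∫ y, f y ∂μ - ∫ y, g y ∂μ - ∫ y, h y ∂μ‖ ≤ μ.real S * M := by
  have hind : Integrable (S.indicator fun _ => M) μ := (integrable_const M).indicator hS
  -- `h` is integrable, being within an integrable distance of `f - g`
  have hh' : Integrable h μ := by
    refine ((hf.sub hg).norm.add hind).mono' hh ?_
    filter_upwards [hfgh] with y hy
    calc ‖h y‖ = ‖(f y - g y) - (f y - g y - h y)‖ := by rw [sub_sub_cancel]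
      _ ≤ ‖f y - g y‖ + ‖f y - g y - h y‖ := norm_sub_le _ _
      _ ≤ _ := by simp only [Pi.add_apply, Pi.sub_apply]; linarith
  rw [← integral_sub hf hg, ← integral_sub (f := fun y => f y - g y) (hf.sub hg) hh',
    ← smul_eq_mul, ← integral_indicator_const M hS]
  exact norm_integral_le_of_norm_le hind hfgh

variable {F : Type*} [NormedAddCommGroup F] [InnerProductSpace ℝ F]

def radialField (ψ : ℝ → ℝ) (v : F) : F := ψ (‖v‖ ^ 2) • v

def radialFieldDeriv (ψ ψ' : ℝ → ℝ) (x v : F) : F :=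
  (2 * ψ' (‖v‖ ^ 2) * ⟪x, v⟫) • v + ψ (‖v‖ ^ 2) • x

def radialFieldDeriv2 (ψ' ψ'' : ℝ → ℝ) (x v : F) : F :=
  (4 * ψ'' (‖v‖ ^ 2) * ⟪x, v⟫ ^ 2 + 2 * ψ' (‖v‖ ^ 2) * ‖x‖ ^ 2) • v
    + (4 * ψ' (‖v‖ ^ 2) * ⟪x, v⟫) • x

theorem hasDerivAt_line (w x : F) (t : ℝ) : HasDerivAt (fun t : ℝ => w + t • x) x t := by
  simpa using ((hasDerivAt_id t).smul_const x).const_add w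

theorem norm_sub_norm_le_norm_neg_add_smul (x y : F) {t : ℝ} (ht : t ∈ Icc (0 : ℝ) 1) :
    ‖y‖ - ‖x‖ ≤ ‖-y + t • x‖ := by
  have htx : ‖t • x‖ ≤ ‖x‖ := by
    rw [norm_smul, Real.norm_of_nonneg ht.1]
    exact mul_le_of_le_one_left (norm_nonneg x) ht.2
  have := norm_sub_le (t • x) (-y + t • x)
  rw [show t • x - (-y + t • x) = y by abel] at this
  linarith

theorem hasDerivAt_norm_sq_line (w x : F) (t : ℝ) :
    HasDerivAt (fun t : ℝ => ‖w + t • x‖ ^ 2) (2 * ⟪x, w + t • x⟫) t := by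
  simpa [real_inner_comm] using (hasDerivAt_line w x t).norm_sq

theorem hasDerivAt_inner_line (w x : F) (t : ℝ) :
    HasDerivAt (fun t : ℝ => ⟪x, w + t • x⟫) (‖x‖ ^ 2) t := by
  simpa [real_inner_self_eq_norm_sq] using (hasDerivAt_const t x).inner ℝ (hasDerivAt_line w x t)

theorem hasDerivAt_radialField_line {ψ ψ' : ℝ → ℝ} {w x : F} {t : ℝ}
    (hψ : HasDerivAt ψ (ψ' (‖w + t • x‖ ^ 2)) (‖w + t • x‖ ^ 2)) :
    HasDerivAt (fun t : ℝ => radialField ψ (w + t • x))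
      (radialFieldDeriv ψ ψ' x (w + t • x)) t := by
  refine ((hψ.comp t (hasDerivAt_norm_sq_line w x t)).smul (hasDerivAt_line w x t)).congr_deriv ?_
  simp only [radialFieldDeriv, Function.comp_apply]
  module

theorem hasDerivAt_radialFieldDeriv_line {ψ ψ' ψ'' : ℝ → ℝ} {w x : F} {t : ℝ}
    (hψ : HasDerivAt ψ (ψ' (‖w + t • x‖ ^ 2)) (‖w + t • x‖ ^ 2))
    (hψ' : HasDerivAt ψ' (ψ'' (‖w + t • x‖ ^ 2)) (‖w + t • x‖ ^ 2)) :
    HasDerivAt (fun t : ℝ => radialFieldDeriv ψ ψ' x (w + t • x))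
      (radialFieldDeriv2 ψ' ψ'' x (w + t • x)) t := by
  have hq := hasDerivAt_norm_sq_line w x t
  refine (((((hψ'.comp t hq).const_mul 2).mul (hasDerivAt_inner_line w x t)).smul
    (hasDerivAt_line w x t)).add ((hψ.comp t hq).smul_const x)).congr_deriv ?_
  simp only [radialFieldDeriv2, Function.comp_apply, Pi.mul_apply]
  module

theorem norm_radialFieldDeriv2_le (ψ' ψ'' : ℝ → ℝ) (x v : F) :
    ‖radialFieldDeriv2 ψ' ψ'' x v‖
      ≤ ‖x‖ ^ 2 * (4 * |ψ'' (‖v‖ ^ 2)| * ‖v‖ ^ 3 + 6 * |ψ' (‖v‖ ^ 2)| * ‖v‖) := by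
  have hinner : |⟪x, v⟫| ≤ ‖x‖ * ‖v‖ := abs_real_inner_le_norm x v
  have hinner_sq : ⟪x, v⟫ ^ 2 ≤ (‖x‖ * ‖v‖) ^ 2 := sq_le_sq' (abs_le.1 hinner).1 (abs_le.1 hinner).2
  set a := |ψ'' (‖v‖ ^ 2)|
  set b := |ψ' (‖v‖ ^ 2)|
  have ha : 0 ≤ a := abs_nonneg _
  have hb : 0 ≤ b := abs_nonneg _
  calc ‖radialFieldDeriv2 ψ' ψ'' x v‖
      ≤ (4 * a * ⟪x, v⟫ ^ 2 + 2 * b * ‖x‖ ^ 2) * ‖v‖ + 4 * b * |⟪x, v⟫| * ‖x‖ := by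
        refine (norm_add_le _ _).trans (add_le_add ?_ ?_) <;>
          rw [norm_smul, Real.norm_eq_abs]
        · gcongr
          refine (abs_add_le _ _).trans_eq ?_
          simp [abs_mul, a, b]
        · simp [abs_mul, b]
    _ ≤ (4 * a * (‖x‖ * ‖v‖) ^ 2 + 2 * b * ‖x‖ ^ 2) * ‖v‖ + 4 * b * (‖x‖ * ‖v‖) * ‖x‖ := by
        gcongr
    _ = ‖x‖ ^ 2 * (4 * a * ‖v‖ ^ 3 + 6 * b * ‖v‖) := by ring

theorem norm_radialField_add_sub_sub_le {ψ ψ' ψ'' : ℝ → ℝ} {w x : F} {M : ℝ}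
    (hψ : ∀ t ∈ Icc (0 : ℝ) 1, HasDerivAt ψ (ψ' (‖w + t • x‖ ^ 2)) (‖w + t • x‖ ^ 2))
    (hψ' : ∀ t ∈ Icc (0 : ℝ) 1, HasDerivAt ψ' (ψ'' (‖w + t • x‖ ^ 2)) (‖w + t • x‖ ^ 2))
    (hM : ∀ t ∈ Icc (0 : ℝ) 1, ‖radialFieldDeriv2 ψ' ψ'' x (w + t • x)‖ ≤ M) :
    ‖radialField ψ (w + x) - radialField ψ w - radialFieldDeriv ψ ψ' x w‖ ≤ M := by
  simpa using norm_sub_sub_deriv_le_of_norm_deriv2_le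
    (fun t ht => hasDerivAt_radialField_line (hψ t ht))
    (fun t ht => hasDerivAt_radialFieldDeriv_line (hψ t ht) (hψ' t ht)) hM

theorem continuousAt_radialField {ψ : ℝ → ℝ} {v : F} (hψ : ContinuousAt ψ (‖v‖ ^ 2)) :
    ContinuousAt (radialField ψ) v :=
  (ContinuousAt.comp (f := fun v : F => ‖v‖ ^ 2) hψ (by fun_prop)).smul continuousAt_id

theorem continuousAt_radialFieldDeriv {ψ ψ' : ℝ → ℝ} {x v : F}
    (hψ : ContinuousAt ψ (‖v‖ ^ 2)) (hψ' : ContinuousAt ψ' (‖v‖ ^ 2)) :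
    ContinuousAt (radialFieldDeriv ψ ψ' x) v := by
  have hq : ContinuousAt (fun v : F => ‖v‖ ^ 2) v := by fun_prop
  exact (((continuousAt_const.mul (ContinuousAt.comp (f := fun v : F => ‖v‖ ^ 2) hψ' hq)).mul
    (continuousAt_const.inner continuousAt_id)).smul continuousAt_id).add
    ((ContinuousAt.comp (f := fun v : F => ‖v‖ ^ 2) hψ hq).smul continuousAt_const)

def kernelProfile (p ε : ℝ) (φ : ℝ → ℝ) (q : ℝ) : ℝ := φ (q / ε ^ 2) * q ^ (-p)

def kernelProfileDeriv (p ε : ℝ) (φ : ℝ → ℝ) (q : ℝ) : ℝ :=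
  q ^ (-p) * (deriv φ (q / ε ^ 2) / ε ^ 2 - p * φ (q / ε ^ 2) / q)

def kernelProfileDeriv2 (p ε : ℝ) (φ : ℝ → ℝ) (q : ℝ) : ℝ :=
  q ^ (-p) * (deriv (deriv φ) (q / ε ^ 2) / ε ^ 4 - 2 * p * deriv φ (q / ε ^ 2) / ε ^ 2 / q
    + p * (p + 1) * φ (q / ε ^ 2) / q ^ 2)

theorem smul_smul_eq_radialField (s ε : ℝ) (φ : ℝ → ℝ) (v : F) :
    φ (‖v‖ ^ 2 / ε ^ 2) • ((‖v‖ ^ (s + 1))⁻¹ • v)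
      = radialField (kernelProfile ((s + 1) / 2) ε φ) v := by
  rw [radialField, kernelProfile, sq_rpow_neg_half (norm_nonneg v), smul_smul]

theorem linearization_eq_radialFieldDeriv (s ε : ℝ) (φ : ℝ → ℝ) (x y : F) :
    (‖y‖ ^ (s + 1))⁻¹ • (φ (‖y‖ ^ 2 / ε ^ 2) • (x - ((s + 1) * ⟪x, y⟫ / ‖y‖ ^ 2) • y)
        + (deriv φ (‖y‖ ^ 2 / ε ^ 2) * (2 * ⟪x, y⟫ / ε ^ 2)) • y)
      = radialFieldDeriv (kernelProfile ((s + 1) / 2) ε φ)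
          (kernelProfileDeriv ((s + 1) / 2) ε φ) x (-y) := by
  rw [radialFieldDeriv, kernelProfile, kernelProfileDeriv, norm_neg, inner_neg_right,
    sq_rpow_neg_half (norm_nonneg y)]
  match_scalars <;> ring

def kernelTaylorConst (p C₀ C₁ C₂ : ℝ) : ℝ :=
  16 ^ p * (32 * (C₂ + 32 * p * C₁ + 256 * p * (p + 1) * C₀) + 12 * (C₁ + 16 * p * C₀))

section KernelProfile

variable {p ε q : ℝ} {φ : ℝ → ℝ}

theorem hasDerivAt_kernelProfile (hq : 0 < q) (hφ : DifferentiableAt ℝ φ (q / ε ^ 2)) :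
    HasDerivAt (kernelProfile p ε φ) (kernelProfileDeriv p ε φ q) q := by
  refine ((hasDerivAt_comp_div_const hφ).mul
    (Real.hasDerivAt_rpow_const (p := -p) (Or.inl hq.ne'))).congr_deriv ?_
  rw [kernelProfileDeriv, Real.rpow_sub_one hq.ne']
  field_simp
  ring

theorem hasDerivAt_kernelProfileDeriv (hq : 0 < q) (hφ : DifferentiableAt ℝ φ (q / ε ^ 2))
    (hφ' : DifferentiableAt ℝ (deriv φ) (q / ε ^ 2)) :
    HasDerivAt (kernelProfileDeriv p ε φ) (kernelProfileDeriv2 p ε φ q) q := by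
  refine ((Real.hasDerivAt_rpow_const (p := -p) (Or.inl hq.ne')).mul
    (((hasDerivAt_comp_div_const hφ').div_const (ε ^ 2)).sub
      (((hasDerivAt_comp_div_const hφ).const_mul p).div (hasDerivAt_id q) hq.ne'))).congr_deriv ?_
  rw [kernelProfileDeriv2, Real.rpow_sub_one hq.ne']
  simp only [id, Pi.sub_apply, Pi.div_apply]
  rcases eq_or_ne ε 0 with rfl | hε <;>
  · field_simp
    ring

theorem rpow_neg_le_of_sq_div_le (hp : 0 ≤ p) (hε : 0 < ε) (hq : ε ^ 2 / 16 ≤ q) :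
    q ^ (-p) ≤ 16 ^ p * (ε ^ 2) ^ (-p) := by
  calc q ^ (-p) ≤ (ε ^ 2 / 16) ^ (-p) :=
        Real.rpow_le_rpow_of_nonpos (by positivity) hq (neg_nonpos.2 hp)
    _ = 16 ^ p * (ε ^ 2) ^ (-p) := by
        rw [Real.div_rpow (by positivity) (by norm_num), Real.rpow_neg (by norm_num : (0:ℝ) ≤ 16),
          div_inv_eq_mul, mul_comm]

theorem abs_kernelProfileDeriv_le {C₀ C₁ : ℝ} (hp : 0 ≤ p) (hε : 0 < ε) (hq : ε ^ 2 / 16 ≤ q)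
    (h₀ : |φ (q / ε ^ 2)| ≤ C₀) (h₁ : |deriv φ (q / ε ^ 2)| ≤ C₁) :
    |kernelProfileDeriv p ε φ q| ≤ 16 ^ p * (ε ^ 2) ^ (-p) * ((C₁ + 16 * p * C₀) / ε ^ 2) := by
  have hq0 : 0 < q := lt_of_lt_of_le (by positivity) hq
  have hinv : q⁻¹ ≤ 16 / ε ^ 2 := by
    rw [inv_le_comm₀ hq0 (by positivity), inv_div]; exact hq
  have hφ₁ : |deriv φ (q / ε ^ 2) / ε ^ 2| ≤ C₁ / ε ^ 2 := by
    rw [abs_div, abs_of_pos (by positivity : (0:ℝ) < ε ^ 2)]; gcongr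
  have hφ₀ : |p * φ (q / ε ^ 2) / q| ≤ 16 * p * C₀ / ε ^ 2 := by
    rw [div_eq_mul_inv, abs_mul, abs_mul, abs_of_nonneg hp, abs_of_pos (inv_pos.2 hq0)]
    calc p * |φ (q / ε ^ 2)| * q⁻¹ ≤ p * C₀ * (16 / ε ^ 2) := by
          have := (abs_nonneg _).trans h₀; gcongr
      _ = 16 * p * C₀ / ε ^ 2 := by ring
  rw [kernelProfileDeriv, abs_mul, abs_of_nonneg (Real.rpow_nonneg hq0.le _)]
  refine mul_le_mul (rpow_neg_le_of_sq_div_le hp hε hq) ((abs_sub _ _).trans ?_) (abs_nonneg _)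
    (by positivity)
  rw [add_div]; exact add_le_add hφ₁ hφ₀

theorem abs_kernelProfileDeriv2_le {C₀ C₁ C₂ : ℝ} (hp : 0 ≤ p) (hε : 0 < ε)
    (hq : ε ^ 2 / 16 ≤ q) (h₀ : |φ (q / ε ^ 2)| ≤ C₀) (h₁ : |deriv φ (q / ε ^ 2)| ≤ C₁)
    (h₂ : |deriv (deriv φ) (q / ε ^ 2)| ≤ C₂) :
    |kernelProfileDeriv2 p ε φ q|
      ≤ 16 ^ p * (ε ^ 2) ^ (-p) * ((C₂ + 32 * p * C₁ + 256 * p * (p + 1) * C₀) / ε ^ 4) := by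
  have hq0 : 0 < q := lt_of_lt_of_le (by positivity) hq
  have hinv : q⁻¹ ≤ 16 / ε ^ 2 := by
    rw [inv_le_comm₀ hq0 (by positivity), inv_div]; exact hq
  have hC₀ : 0 ≤ C₀ := (abs_nonneg _).trans h₀
  have hC₁ : 0 ≤ C₁ := (abs_nonneg _).trans h₁
  have hφ₂ : |deriv (deriv φ) (q / ε ^ 2) / ε ^ 4| ≤ C₂ / ε ^ 4 := by
    rw [abs_div, abs_of_pos (by positivity : (0:ℝ) < ε ^ 4)]; gcongr
  have hφ₁ : |2 * p * deriv φ (q / ε ^ 2) / ε ^ 2 / q| ≤ 32 * p * C₁ / ε ^ 4 := by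
    rw [div_eq_mul_inv _ q, abs_mul, abs_div, abs_mul, abs_of_nonneg (by positivity : 0 ≤ 2 * p),
      abs_of_pos (inv_pos.2 hq0), abs_of_pos (by positivity : (0:ℝ) < ε ^ 2)]
    calc 2 * p * |deriv φ (q / ε ^ 2)| / ε ^ 2 * q⁻¹ ≤ 2 * p * C₁ / ε ^ 2 * (16 / ε ^ 2) := by
          gcongr
      _ = 32 * p * C₁ / ε ^ 4 := by field_simp; ring
  have hφ₀ : |p * (p + 1) * φ (q / ε ^ 2) / q ^ 2| ≤ 256 * p * (p + 1) * C₀ / ε ^ 4 := by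
    rw [div_eq_mul_inv, ← inv_pow, abs_mul, abs_mul,
      abs_of_nonneg (by positivity : 0 ≤ p * (p + 1)), abs_of_pos (by positivity : 0 < q⁻¹ ^ 2)]
    calc p * (p + 1) * |φ (q / ε ^ 2)| * q⁻¹ ^ 2 ≤ p * (p + 1) * C₀ * (16 / ε ^ 2) ^ 2 := by
          gcongr
      _ = 256 * p * (p + 1) * C₀ / ε ^ 4 := by field_simp; ring
  rw [kernelProfileDeriv2, abs_mul, abs_of_nonneg (Real.rpow_nonneg hq0.le _)]
  refine mul_le_mul (rpow_neg_le_of_sq_div_le hp hε hq) ?_ (abs_nonneg _) (by positivity)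
  calc _ ≤ |deriv (deriv φ) (q / ε ^ 2) / ε ^ 4| + |2 * p * deriv φ (q / ε ^ 2) / ε ^ 2 / q|
        + |p * (p + 1) * φ (q / ε ^ 2) / q ^ 2| :=
        (abs_add_le _ _).trans (add_le_add_left (abs_sub _ _) _)
    _ ≤ _ := by rw [add_div, add_div]; gcongr

theorem kernelProfile_eq_of_le (hφ₁ : ∀ u ∈ Icc (0 : ℝ) 1, φ u = u ^ p) (hq : 0 < q)
    (hqε : q ≤ ε ^ 2) : kernelProfile p ε φ q = (ε ^ 2) ^ (-p) := by
  have hε : 0 < ε ^ 2 := hq.trans_le hqε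
  rw [kernelProfile, hφ₁ _ ⟨by positivity, (div_le_one hε).2 hqε⟩,
    Real.div_rpow hq.le hε.le, Real.rpow_neg hq.le, Real.rpow_neg hε.le]
  have := Real.rpow_pos_of_pos hq p
  field_simp

theorem kernelProfileDeriv_eq_zero_of_lt (hφ₁ : ∀ u ∈ Icc (0 : ℝ) 1, φ u = u ^ p)
    (hφ : DifferentiableAt ℝ φ (q / ε ^ 2)) (hq : 0 < q) (hqε : q < ε ^ 2) :
    kernelProfileDeriv p ε φ q = 0 := by
  have hconst : kernelProfile p ε φ =ᶠ[𝓝 q] fun _ => (ε ^ 2) ^ (-p) :=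
    eventually_of_mem (Ioo_mem_nhds hq hqε) fun r hr => kernelProfile_eq_of_le hφ₁ hr.1 hr.2.le
  exact (hasDerivAt_kernelProfile hq hφ).unique
    ((hasDerivAt_const q ((ε ^ 2) ^ (-p))).congr_of_eventuallyEq hconst)

theorem radialField_kernelProfile_of_norm_le (hφ₁ : ∀ u ∈ Icc (0 : ℝ) 1, φ u = u ^ p) {v : F}
    (hv : ‖v‖ ≤ ε) : radialField (kernelProfile p ε φ) v = (ε ^ 2) ^ (-p) • v := by
  rcases eq_or_ne v 0 with rfl | hv0
  · simp [radialField]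
  rw [radialField, kernelProfile_eq_of_le hφ₁ (by positivity)
    (pow_le_pow_left₀ (norm_nonneg v) hv 2)]

theorem radialFieldDeriv_kernelProfile_of_norm_lt (hφ₁ : ∀ u ∈ Icc (0 : ℝ) 1, φ u = u ^ p)
    {x v : F} (hφ : DifferentiableAt ℝ φ (‖v‖ ^ 2 / ε ^ 2)) (hv0 : v ≠ 0) (hv : ‖v‖ < ε) :
    radialFieldDeriv (kernelProfile p ε φ) (kernelProfileDeriv p ε φ) x v = (ε ^ 2) ^ (-p) • x := by
  have hq : 0 < ‖v‖ ^ 2 := by positivity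
  have hqε : ‖v‖ ^ 2 < ε ^ 2 := pow_lt_pow_left₀ hv (norm_nonneg v) two_ne_zero
  rw [radialFieldDeriv, kernelProfileDeriv_eq_zero_of_lt hφ₁ hφ hq hqε,
    kernelProfile_eq_of_le hφ₁ hq hqε.le]
  simp

theorem radialField_kernelProfile_eq_zero (hε : 0 < ε) (hφ₃ : ∀ u, 3 < u → φ u = 0) {v : F}
    (hv : 3 * ε ^ 2 < ‖v‖ ^ 2) : radialField (kernelProfile p ε φ) v = 0 := by
  rw [radialField, kernelProfile, hφ₃ _ ((lt_div_iff₀ (by positivity)).2 hv)]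
  simp

theorem radialFieldDeriv2_kernelProfile_eq_zero (hε : 0 < ε) (hφ₃ : ∀ u, 3 < u → φ u = 0)
    {x v : F} (hv : 3 * ε ^ 2 < ‖v‖ ^ 2) :
    radialFieldDeriv2 (kernelProfileDeriv p ε φ) (kernelProfileDeriv2 p ε φ) x v = 0 := by
  have hu : 3 < ‖v‖ ^ 2 / ε ^ 2 := (lt_div_iff₀ (by positivity)).2 hv
  have hφ₃' : ∀ u, 3 < u → deriv φ u = 0 := fun u hu => deriv_eq_zero_of_forall_gt hφ₃ hu
  simp [radialFieldDeriv2, kernelProfileDeriv, kernelProfileDeriv2, hφ₃ _ hu, hφ₃' _ hu,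
    deriv_eq_zero_of_forall_gt hφ₃' hu]

theorem norm_radialFieldDeriv2_kernelProfile_le {C₀ C₁ C₂ : ℝ} (hp : 0 ≤ p) (hε : 0 < ε)
    (hφ₃ : ∀ u, 3 < u → φ u = 0) (h₀ : ∀ u, |φ u| ≤ C₀) (h₁ : ∀ u, |deriv φ u| ≤ C₁)
    (h₂ : ∀ u, |deriv (deriv φ) u| ≤ C₂) {x v : F} (hv : ε / 4 ≤ ‖v‖) :
    ‖radialFieldDeriv2 (kernelProfileDeriv p ε φ) (kernelProfileDeriv2 p ε φ) x v‖
      ≤ ‖x‖ ^ 2 * ((ε ^ 2) ^ (-p) / ε) * kernelTaylorConst p C₀ C₁ C₂ := by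
  have hC₀ : 0 ≤ C₀ := (abs_nonneg _).trans (h₀ 0)
  have hC₁ : 0 ≤ C₁ := (abs_nonneg _).trans (h₁ 0)
  have hC₂ : 0 ≤ C₂ := (abs_nonneg _).trans (h₂ 0)
  by_cases hv3 : 3 * ε ^ 2 < ‖v‖ ^ 2
  · rw [radialFieldDeriv2_kernelProfile_eq_zero hε hφ₃ hv3, norm_zero]
    unfold kernelTaylorConst
    positivity
  have hv2 : ‖v‖ ≤ 2 * ε := by nlinarith [norm_nonneg v]
  have hq : ε ^ 2 / 16 ≤ ‖v‖ ^ 2 := by nlinarith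
  refine (norm_radialFieldDeriv2_le _ _ x v).trans ?_
  have hψ' := abs_kernelProfileDeriv_le hp hε hq (h₀ _) (h₁ _)
  have hψ'' := abs_kernelProfileDeriv2_le hp hε hq (h₀ _) (h₁ _) (h₂ _)
  calc ‖x‖ ^ 2 * (4 * |kernelProfileDeriv2 p ε φ (‖v‖ ^ 2)| * ‖v‖ ^ 3
        + 6 * |kernelProfileDeriv p ε φ (‖v‖ ^ 2)| * ‖v‖)
      ≤ ‖x‖ ^ 2 * (4 * (16 ^ p * (ε ^ 2) ^ (-p)
            * ((C₂ + 32 * p * C₁ + 256 * p * (p + 1) * C₀) / ε ^ 4)) * (2 * ε) ^ 3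
          + 6 * (16 ^ p * (ε ^ 2) ^ (-p) * ((C₁ + 16 * p * C₀) / ε ^ 2)) * (2 * ε)) := by
        gcongr
    _ = ‖x‖ ^ 2 * ((ε ^ 2) ^ (-p) / ε) * kernelTaylorConst p C₀ C₁ C₂ := by
        unfold kernelTaylorConst
        field_simp
        ring

theorem norm_radialField_kernelProfile_sub_sub_le {C₀ C₁ C₂ : ℝ} (hp : 0 ≤ p) (hε : 0 < ε)
    (hφd : ∀ u, 0 < u → DifferentiableAt ℝ φ u)
    (hφd' : ∀ u, 0 < u → DifferentiableAt ℝ (deriv φ) u)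
    (hφ₁ : ∀ u ∈ Icc (0 : ℝ) 1, φ u = u ^ p) (hφ₃ : ∀ u, 3 < u → φ u = 0)
    (h₀ : ∀ u, |φ u| ≤ C₀) (h₁ : ∀ u, |deriv φ u| ≤ C₁) (h₂ : ∀ u, |deriv (deriv φ) u| ≤ C₂)
    {x y : F} (hx : ‖x‖ < ε / 4) (hy : y ≠ 0) :
    ‖radialField (kernelProfile p ε φ) (x - y) - radialField (kernelProfile p ε φ) (-y)
        - radialFieldDeriv (kernelProfile p ε φ) (kernelProfileDeriv p ε φ) x (-y)‖
      ≤ (ball (0 : F) (3 * ε)).indicator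
          (fun _ => ‖x‖ ^ 2 * ((ε ^ 2) ^ (-p) / ε) * kernelTaylorConst p C₀ C₁ C₂) y := by
  have hC₀ : 0 ≤ C₀ := (abs_nonneg _).trans (h₀ 0)
  have hC₁ : 0 ≤ C₁ := (abs_nonneg _).trans (h₁ 0)
  have hC₂ : 0 ≤ C₂ := (abs_nonneg _).trans (h₂ 0)
  have hM : 0 ≤ ‖x‖ ^ 2 * ((ε ^ 2) ^ (-p) / ε) * kernelTaylorConst p C₀ C₁ C₂ := by
    unfold kernelTaylorConst; positivity
  have hy0 : 0 < ‖y‖ := norm_pos_iff.2 hy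
  by_cases hy₂ : ‖y‖ ≤ ε / 2
  -- near the origin the kernel is linear, so the remainder vanishes
  · have hxy : ‖x - y‖ ≤ ε := (norm_sub_le x y).trans (by linarith)
    rw [radialField_kernelProfile_of_norm_le hφ₁ hxy,
      radialField_kernelProfile_of_norm_le hφ₁ (by rw [norm_neg]; linarith),
      radialFieldDeriv_kernelProfile_of_norm_lt hφ₁ (hφd _ (by rw [norm_neg]; positivity))
        (neg_ne_zero.2 hy) (by rw [norm_neg]; linarith)]
    simpa [← smul_sub, ← smul_add] using indicator_nonneg (fun _ _ => hM) y
  push Not at hy₂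
  have hseg : ∀ t ∈ Icc (0 : ℝ) 1, ε / 4 ≤ ‖-y + t • x‖ := fun t ht =>
    (by linarith : ε / 4 ≤ ‖y‖ - ‖x‖).trans (norm_sub_norm_le_norm_neg_add_smul x y ht)
  have hq : ∀ t ∈ Icc (0 : ℝ) 1, 0 < ‖-y + t • x‖ ^ 2 := fun t ht =>
    pow_pos ((by positivity : 0 < ε / 4).trans_le (hseg t ht)) 2
  have hu : ∀ t ∈ Icc (0 : ℝ) 1, 0 < ‖-y + t • x‖ ^ 2 / ε ^ 2 := fun t ht =>
    div_pos (hq t ht) (by positivity)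
  rw [← neg_add_eq_sub y x]
  refine norm_radialField_add_sub_sub_le
    (fun t ht => hasDerivAt_kernelProfile (hq t ht) (hφd _ (hu t ht)))
    (fun t ht => hasDerivAt_kernelProfileDeriv (hq t ht) (hφd _ (hu t ht)) (hφd' _ (hu t ht)))
    (fun t ht => ?_)
  by_cases hyB : y ∈ ball (0 : F) (3 * ε)
  · rw [indicator_of_mem hyB]
    exact norm_radialFieldDeriv2_kernelProfile_le hp hε hφ₃ h₀ h₁ h₂ (hseg t ht)
  · rw [indicator_of_notMem hyB, radialFieldDeriv2_kernelProfile_eq_zero hε hφ₃, norm_zero]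
    rw [mem_ball, dist_zero_right, not_lt] at hyB
    nlinarith [norm_sub_norm_le_norm_neg_add_smul x y ht]

theorem continuous_radialField_kernelProfile (hε : 0 < ε)
    (hφd : ∀ u, 0 < u → DifferentiableAt ℝ φ u) (hφ₁ : ∀ u ∈ Icc (0 : ℝ) 1, φ u = u ^ p) :
    Continuous (radialField (kernelProfile p ε φ) : F → F) := by
  refine continuous_iff_continuousAt.2 fun v => ?_
  rcases eq_or_ne v 0 with rfl | hv
  · have hlin : (fun w : F => (ε ^ 2) ^ (-p) • w) =ᶠ[𝓝 0] radialField (kernelProfile p ε φ) :=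
      eventually_of_mem (ball_mem_nhds 0 hε) fun w hw =>
        (radialField_kernelProfile_of_norm_le hφ₁ (mem_ball_zero_iff.1 hw).le).symm
    exact (continuous_const_smul _).continuousAt.congr hlin
  · have hq : 0 < ‖v‖ ^ 2 := by positivity
    exact continuousAt_radialField
      (hasDerivAt_kernelProfile hq (hφd _ (by positivity))).continuousAt

theorem integrable_radialField_kernelProfile_sub [ProperSpace F] [MeasurableSpace F]
    [BorelSpace F] (μ : Measure F) [IsFiniteMeasureOnCompacts μ] (hε : 0 < ε)
    (hφd : ∀ u, 0 < u → DifferentiableAt ℝ φ u) (hφ₁ : ∀ u ∈ Icc (0 : ℝ) 1, φ u = u ^ p)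
    (hφ₃ : ∀ u, 3 < u → φ u = 0) (z : F) :
    Integrable (fun y => radialField (kernelProfile p ε φ) (z - y)) μ := by
  refine ((continuous_radialField_kernelProfile hε hφd hφ₁).comp
    (continuous_sub_left z)).integrable_of_hasCompactSupport
    (HasCompactSupport.intro (isCompact_closedBall z (2 * ε)) fun y hy => ?_)
  rw [mem_closedBall, dist_comm, dist_eq_norm, not_le] at hy
  exact radialField_kernelProfile_eq_zero hε hφ₃ (by nlinarith)

theorem continuousOn_radialFieldDeriv_kernelProfile_neg (hε : 0 < ε)
    (hφd : ∀ u, 0 < u → DifferentiableAt ℝ φ u)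
    (hφd' : ∀ u, 0 < u → DifferentiableAt ℝ (deriv φ) u) (x : F) :
    ContinuousOn (fun y => radialFieldDeriv (kernelProfile p ε φ) (kernelProfileDeriv p ε φ) x (-y))
      {0}ᶜ := by
  intro y hy
  have hq : 0 < ‖-y‖ ^ 2 := by rw [norm_neg]; exact pow_pos (norm_pos_iff.2 hy) 2
  have hu : 0 < ‖-y‖ ^ 2 / ε ^ 2 := div_pos hq (by positivity)
  refine ContinuousAt.continuousWithinAt ((continuousAt_radialFieldDeriv
    (hasDerivAt_kernelProfile hq (hφd _ hu)).continuousAt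
    (hasDerivAt_kernelProfileDeriv hq (hφd _ hu) (hφd' _ hu)).continuousAt).comp
    continuousAt_neg)

end KernelProfile

end

theorem taylor_lemma_error_bound_general (m : ℕ) (s ρ C Cρ : ℝ)
    (hs : 0 < s) (hρ : 0 < ρ) (hC : 0 < C) (hCρ : 0 < Cρ) :
    ∃ C₁ : ℝ, 0 < C₁ ∧
      ∀ (μ : Measure (EuclideanSpace ℝ (Fin m))), IsFiniteMeasure μ →
        ∀ (θ r₀ ε : ℝ) (φ : ℝ → ℝ),
        0 < θ → 0 < r₀ → 0 < ε →
        (∀ t : ℝ, 0 < t → t ≤ r₀ →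
          μ (ball (0 : EuclideanSpace ℝ (Fin m)) t) ≤ ENNReal.ofReal (2 * θ * t ^ s)) →
        ContDiffOn ℝ 2 φ (Ioi 0) →
        (∀ t ∈ Icc (0 : ℝ) 1, φ t = t ^ ((s + 1) / 2)) →
        (∀ t : ℝ, 3 < t → φ t = 0) →
        (∀ t : ℝ, |φ t| ≤ C) →
        (∀ t : ℝ, |deriv φ t| ≤ 1 / ρ) →
        (∀ t : ℝ, |deriv (deriv φ) t| ≤ Cρ) →
        ∀ x : EuclideanSpace ℝ (Fin m), ‖x‖ < ε / 4 →
          ‖((∫ y, φ (‖x - y‖ ^ 2 / ε ^ 2) • ((‖x - y‖ ^ (s + 1))⁻¹ • (x - y)) ∂μ)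
              - ∫ y, φ (‖(0 : EuclideanSpace ℝ (Fin m)) - y‖ ^ 2 / ε ^ 2) •
                  ((‖(0 : EuclideanSpace ℝ (Fin m)) - y‖ ^ (s + 1))⁻¹ •
                    ((0 : EuclideanSpace ℝ (Fin m)) - y)) ∂μ)
            - ∫ y, (‖y‖ ^ (s + 1))⁻¹ •
                (φ (‖y‖ ^ 2 / ε ^ 2) •
                    (x - ((s + 1) * (inner ℝ x y : ℝ) / ‖y‖ ^ 2) • y)
                  + (deriv φ (‖y‖ ^ 2 / ε ^ 2) * (2 * (inner ℝ x y : ℝ) / ε ^ 2)) • y) ∂μ‖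
            ≤ C₁ * ((μ (ball (0 : EuclideanSpace ℝ (Fin m)) (3 * ε))).toReal
                / (3 * ε) ^ s) * ‖x‖ ^ 2 / ε ^ 2 := by
  have hp : 0 ≤ (s + 1) / 2 := by positivity
  refine ⟨kernelTaylorConst ((s + 1) / 2) C (1 / ρ) Cρ * 3 ^ s,
    by unfold kernelTaylorConst; positivity, ?_⟩
  intro μ _ θ r₀ ε φ _ hr₀ hε hball hφ hφ₁ hφ₃ h₀ h₁ h₂ x hx
  have hφd : ∀ u, 0 < u → DifferentiableAt ℝ φ u := fun u hu =>
    (hφ.contDiffAt (Ioi_mem_nhds hu)).differentiableAt two_ne_zero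
  have hφd' : ∀ u, 0 < u → DifferentiableAt ℝ (deriv φ) u := fun u hu =>
    ((hφ.deriv_of_isOpen isOpen_Ioi (by norm_num)).contDiffAt (Ioi_mem_nhds hu)).differentiableAt
      one_ne_zero
  have hμ0 := measure_singleton_eq_zero_of_measure_ball_le hs hr₀ hball
  simp only [smul_smul_eq_radialField, linearization_eq_radialFieldDeriv, zero_sub]
  refine (norm_integral_sub_sub_le (S := ball 0 (3 * ε))
    (M := ‖x‖ ^ 2 * ((ε ^ 2) ^ (-((s + 1) / 2)) / ε) * kernelTaylorConst ((s + 1) / 2) C (1 / ρ) Cρ)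
    (integrable_radialField_kernelProfile_sub μ hε hφd hφ₁ hφ₃ x)
    (by simpa using integrable_radialField_kernelProfile_sub μ hε hφd hφ₁ hφ₃ 0)
    (aestronglyMeasurable_of_continuousOn_compl_singleton
      (continuousOn_radialFieldDeriv_kernelProfile_neg hε hφd hφd' x) hμ0)
    measurableSet_ball ?_).trans_eq ?_
  · filter_upwards [compl_mem_ae_iff.2 hμ0] with y hy
    exact norm_radialField_kernelProfile_sub_sub_le hp hε hφd hφd' hφ₁ hφ₃ h₀ h₁ h₂ hx hy
  · rw [measureReal_def, sq_rpow_neg_half hε.le, Real.rpow_add_one hε.ne',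
      Real.mul_rpow (by norm_num) hε.le]
    have := Real.rpow_pos_of_pos hε s
    field_simp

/-- Taylor lemma: the increment `R^s_{φ,ε}μ(x) − R^s_{φ,ε}μ(0)` equals the linearization
`T^ε(x)` up to an error bounded by `C₁ θ^s(3ε) |x|²/ε²`. -/
theorem taylor_lemma_error_bound (m : ℕ) (s ρ C Cρ : ℝ)
    (hs : 0 < s) (hρ : 0 < ρ) (hρ' : ρ < 1 / 2) (hC : 0 < C) (hCρ : 0 < Cρ) :
    ∃ C₁ : ℝ, 0 < C₁ ∧
      ∀ (μ : Measure (EuclideanSpace ℝ (Fin m))), IsFiniteMeasure μ →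
        ∀ (θ r₀ ε : ℝ) (φ : ℝ → ℝ),
        0 < θ → 0 < r₀ → 0 < ε →
        (∀ t : ℝ, 0 < t → t ≤ r₀ →
          μ (ball (0 : EuclideanSpace ℝ (Fin m)) t) ≤ ENNReal.ofReal (2 * θ * t ^ s)) →
        ContDiffOn ℝ 2 φ (Ioi 0) →
        (∀ t ∈ Icc (0 : ℝ) 1, φ t = t ^ ((s + 1) / 2)) →
        (∀ t : ℝ, 3 < t → φ t = 0) →
        (∀ t : ℝ, |φ t| ≤ C) →
        (∀ t : ℝ, |deriv φ t| ≤ 1 / ρ) →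
        (∀ t : ℝ, |deriv (deriv φ) t| ≤ Cρ) →
        ∀ x : EuclideanSpace ℝ (Fin m), ‖x‖ < ε / 4 →
          ‖((∫ y, φ (‖x - y‖ ^ 2 / ε ^ 2) • ((‖x - y‖ ^ (s + 1))⁻¹ • (x - y)) ∂μ)
              - ∫ y, φ (‖(0 : EuclideanSpace ℝ (Fin m)) - y‖ ^ 2 / ε ^ 2) •
                  ((‖(0 : EuclideanSpace ℝ (Fin m)) - y‖ ^ (s + 1))⁻¹ •
                    ((0 : EuclideanSpace ℝ (Fin m)) - y)) ∂μ)
            - ∫ y, (‖y‖ ^ (s + 1))⁻¹ •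
                (φ (‖y‖ ^ 2 / ε ^ 2) •
                    (x - ((s + 1) * (inner ℝ x y : ℝ) / ‖y‖ ^ 2) • y)
                  + (deriv φ (‖y‖ ^ 2 / ε ^ 2) * (2 * (inner ℝ x y : ℝ) / ε ^ 2)) • y) ∂μ‖
            ≤ C₁ * ((μ (ball (0 : EuclideanSpace ℝ (Fin m)) (3 * ε))).toReal
                / (3 * ε) ^ s) * ‖x‖ ^ 2 / ε ^ 2 :=
  taylor_lemma_error_bound_general m s ρ C Cρ hs hρ hC hCρ
end

section
/- Uniform Cauchy estimate on F_δ: let μ be a finite Borel measure on ℝ^m with μ(B(x,r)) ≤ M r^s for all x ∈ F_δ and r > 0, and let F_δ be a set of points x such that |R^s_{φ,ε}μ(x) − R^s_{φ,ε'}μ(x)| ≤ δ for all ε, ε' ≤ ε₀. If k_{φ,η} is Lipschitz with constant C(ρ)/η^{s+1} and supported in B(0,3η), then for any x₀ ∈ ℝ^m, r > 0 with ε ≤ ε₀ and η := r/δ ≤ ε₀, and any x, z ∈ B(x₀, r) ∩ F_δ, one has |R^s_{φ,ε}μ(x) − R^s_{φ,ε}μ(z)| ≤ C₆ δ, where C₆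 depends only on ρ, s, m, M. -/
/-!
At the coarse scale `η = r / δ` the kernel `k_{φ,η}` is `CL / η^(s+1)`-Lipschitz, and the
difference `k_{φ,η}(x - ·) - k_{φ,η}(z - ·)` vanishes outside a ball of radius `< 5η`
about `x`, whose measure is `≤ M (5η)^s`. Hence `R_η μ x - R_η μ z = O(|x - z| / η) = O(δ)`,
since `|x - z| < 2r = 2δη`. The Cauchy condition on `F_δ` compares the scales `ε` and `η`
at `x` and at `z`, at cost `δ` each.
-/

open MeasureTheory Metric Set Filter

/-- The smoothed Riesz kernel `k_{φ,η}(u) = φ(|u|²/η²) u/|u|^{s+1}`. -/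
noncomputable def smoothedRieszKernel (m : ℕ) (s : ℝ) (φ : ℝ → ℝ) (η : ℝ)
    (u : EuclideanSpace ℝ (Fin m)) : EuclideanSpace ℝ (Fin m) :=
  φ (‖u‖ ^ 2 / η ^ 2) • ((‖u‖ ^ (s + 1))⁻¹ • u)

/-- The smoothly truncated Riesz transform `R^s_{φ,η}μ(x) = ∫ k_{φ,η}(x−y) dμ(y)`. -/
noncomputable def smoothedRieszTransform (m : ℕ) (s : ℝ) (φ : ℝ → ℝ) (η : ℝ)
    (μ : Measure (EuclideanSpace ℝ (Fin m))) (x : EuclideanSpace ℝ (Fin m)) :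
    EuclideanSpace ℝ (Fin m) :=
  ∫ y, smoothedRieszKernel m s φ η (x - y) ∂μ

open scoped NNReal

section TranslatedKernels

variable {E F : Type*} [NormedAddCommGroup E] [MeasurableSpace E]
  [NormedAddCommGroup F] {μ : Measure E} [IsFiniteMeasure μ] {k : E → F}

theorem Continuous.integrable_comp_sub_of_hasCompactSupport [OpensMeasurableSpace E]
    (hk : Continuous k) (hcs : HasCompactSupport k) (w : E) : Integrable (fun y => k (w - y)) μ :=
  (hk.comp (continuous_const.sub continuous_id)).integrable_of_hasCompactSupport
    (hcs.comp_homeomorph (Homeomorph.subLeft w))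

theorem LipschitzWith.norm_integral_comp_sub_sub_le [NormedSpace ℝ F] {L : ℝ≥0} {R : ℝ}
    (hk : LipschitzWith L k) (hsupp : ∀ u, R < ‖u‖ → k u = 0) {x z : E}
    (hx : Integrable (fun y => k (x - y)) μ) (hz : Integrable (fun y => k (z - y)) μ) :
    ‖∫ y, k (x - y) ∂μ - ∫ y, k (z - y) ∂μ‖
      ≤ L * ‖x - z‖ * μ.real (closedBall x (R + ‖x - z‖)) := by
  have hvanish : ∀ y ∉ closedBall x (R + ‖x - z‖), k (x - y) - k (z - y) = 0 := by
    intro y hy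
    rw [mem_closedBall, not_le, dist_comm, dist_eq_norm] at hy
    have hzy : R < ‖z - y‖ := by linarith [norm_sub_le_norm_sub_add_norm_sub x z y]
    rw [hsupp _ (by linarith [norm_nonneg (x - z)]), hsupp _ hzy, sub_zero]
  rw [← integral_sub hx hz, ← setIntegral_eq_integral_of_forall_compl_eq_zero hvanish]
  refine norm_setIntegral_le_of_norm_le_const (measure_lt_top _ _) fun y _ => ?_
  simpa [dist_eq_norm] using hk.dist_le_mul (x - y) (z - y)

end TranslatedKernels

theorem norm_smoothedRieszTransform_sub_le {m : ℕ} {s : ℝ} {φ : ℝ → ℝ} {η CL M : ℝ}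
    {μ : Measure (EuclideanSpace ℝ (Fin m))} [IsFiniteMeasure μ]
    {x z : EuclideanSpace ℝ (Fin m)} (hη : 0 < η) (hCL : 0 ≤ CL) (hM : 0 ≤ M)
    (hlip : LipschitzWith (CL / η ^ (s + 1)).toNNReal (smoothedRieszKernel m s φ η))
    (hsupp : ∀ u, 3 * η < ‖u‖ → smoothedRieszKernel m s φ η u = 0)
    (hgrowth : μ (ball x (5 * η)) ≤ ENNReal.ofReal (M * (5 * η) ^ s))
    (hxz : ‖x - z‖ < 2 * η) :
    ‖smoothedRieszTransform m s φ η μ x - smoothedRieszTransform m s φ η μ z‖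
      ≤ 5 ^ s * CL * M * ‖x - z‖ / η := by
  have hcs : HasCompactSupport (smoothedRieszKernel m s φ η) :=
    HasCompactSupport.intro (isCompact_closedBall 0 (3 * η)) fun u hu =>
      hsupp u (by simpa using hu)
  have hint := hlip.continuous.integrable_comp_sub_of_hasCompactSupport (μ := μ) hcs
  have hball : μ.real (closedBall x (3 * η + ‖x - z‖)) ≤ M * (5 * η) ^ s :=
    ENNReal.toReal_le_of_le_ofReal (by positivity)
      ((measure_mono (closedBall_subset_ball (by linarith))).trans hgrowth)
  calc _ ≤ (CL / η ^ (s + 1)).toNNReal * ‖x - z‖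
          * μ.real (closedBall x (3 * η + ‖x - z‖)) :=
        hlip.norm_integral_comp_sub_sub_le hsupp (hint x) (hint z)
    _ ≤ CL / η ^ (s + 1) * ‖x - z‖ * (M * (5 * η) ^ s) := by
        rw [Real.coe_toNNReal _ (by positivity)]
        gcongr
    _ = 5 ^ s * CL * M * ‖x - z‖ / η := by
        rw [Real.mul_rpow (by norm_num) hη.le, Real.rpow_add_one hη.ne']
        field_simp

theorem cauchy_estimate_on_Fdelta_general (s M CL : ℝ)
    (hM : 0 < M) (hCL : 0 < CL) :
    ∃ C₆ : ℝ, 0 < C₆ ∧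
      ∀ (m : ℕ) (μ : Measure (EuclideanSpace ℝ (Fin m))), IsFiniteMeasure μ →
        ∀ (φ : ℝ → ℝ) (δ ε₀ : ℝ) (Fδ : Set (EuclideanSpace ℝ (Fin m)))
          (x₀ : EuclideanSpace ℝ (Fin m)) (r ε : ℝ),
        0 < δ → δ < 1 / 4 → 0 < ε₀ → 0 < r → 0 < ε → ε ≤ ε₀ → r / δ ≤ ε₀ →
        (∀ x ∈ Fδ, ∀ t : ℝ, 0 < t →
          μ (ball x t) ≤ ENNReal.ofReal (M * t ^ s)) →
        (∀ x ∈ Fδ, ∀ e e' : ℝ, 0 < e → e ≤ ε₀ → 0 < e' → e' ≤ ε₀ →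
          ‖smoothedRieszTransform m s φ e μ x - smoothedRieszTransform m s φ e' μ x‖ ≤ δ) →
        (∀ η : ℝ, 0 < η →
          LipschitzWith (Real.toNNReal (CL / η ^ (s + 1)))
            (smoothedRieszKernel m s φ η) ∧
          ∀ u : EuclideanSpace ℝ (Fin m), 3 * η < ‖u‖ →
            smoothedRieszKernel m s φ η u = 0) →
        ∀ x ∈ ball x₀ r ∩ Fδ, ∀ z ∈ ball x₀ r ∩ Fδ,
          ‖smoothedRieszTransform m s φ ε μ x - smoothedRieszTransform m s φ ε μ z‖
            ≤ C₆ * δ := by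
  refine ⟨2 + 2 * 5 ^ s * CL * M, by positivity, ?_⟩
  intro m μ _ φ δ ε₀ Fδ x₀ r ε hδ hδ_lt _ hr hε hεε₀ hηε₀ hgrowth hcauchy hker
    x ⟨hxB, hxF⟩ z ⟨hzB, hzF⟩
  set η := r / δ
  have hη : 0 < η := div_pos hr hδ
  have hxz : ‖x - z‖ ≤ 2 * δ * η := by
    have hr_eq : δ * η = r := mul_div_cancel₀ r hδ.ne'
    rw [← dist_eq_norm]
    linarith [dist_triangle_right x z x₀, mem_ball.mp hxB, mem_ball.mp hzB]
  set Rε := smoothedRieszTransform m s φ ε μ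
  set Rη := smoothedRieszTransform m s φ η μ
  have hcoarse : ‖Rη x - Rη z‖ ≤ 2 * 5 ^ s * CL * M * δ := by
    obtain ⟨hlip, hsupp⟩ := hker η hη
    calc ‖Rη x - Rη z‖ ≤ 5 ^ s * CL * M * ‖x - z‖ / η :=
          norm_smoothedRieszTransform_sub_le hη hCL.le hM.le hlip hsupp
            (hgrowth x hxF _ (by positivity)) (by nlinarith [hδ_lt])
      _ ≤ 5 ^ s * CL * M * (2 * δ * η) / η := by gcongr
      _ = 2 * 5 ^ s * CL * M * δ := by field_simp
  calc ‖Rε x - Rε z‖ ≤ ‖Rε x - Rη x‖ + ‖Rη x - Rη z‖ + ‖Rη z - Rε z‖ :=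
        (norm_sub_le_norm_sub_add_norm_sub _ (Rη z) _).trans
          (add_le_add_left (norm_sub_le_norm_sub_add_norm_sub _ _ _) _)
    _ ≤ δ + 2 * 5 ^ s * CL * M * δ + δ := by
        gcongr
        exacts [hcauchy x hxF ε η hε hεε₀ hη hηε₀, hcauchy z hzF η ε hη hηε₀ hε hεε₀]
    _ = (2 + 2 * 5 ^ s * CL * M) * δ := by ring

/-- Uniform Cauchy estimate on `F_δ`: any two points of `B(x₀,r) ∩ F_δ` have smoothed
Riesz transforms at scale `ε` differing by at most `C₆ δ`. -/
theorem cauchy_estimate_on_Fdelta (s ρ M CL : ℝ)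
    (hs : 0 < s) (hρ : 0 < ρ) (hM : 0 < M) (hCL : 0 < CL) :
    ∃ C₆ : ℝ, 0 < C₆ ∧
      ∀ (m : ℕ) (μ : Measure (EuclideanSpace ℝ (Fin m))), IsFiniteMeasure μ →
        ∀ (φ : ℝ → ℝ) (δ ε₀ : ℝ) (Fδ : Set (EuclideanSpace ℝ (Fin m)))
          (x₀ : EuclideanSpace ℝ (Fin m)) (r ε : ℝ),
        0 < δ → δ < 1 / 4 → 0 < ε₀ → 0 < r → 0 < ε → ε ≤ ε₀ → r / δ ≤ ε₀ →
        (∀ x ∈ Fδ, ∀ t : ℝ, 0 < t →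
          μ (ball x t) ≤ ENNReal.ofReal (M * t ^ s)) →
        (∀ x ∈ Fδ, ∀ e e' : ℝ, 0 < e → e ≤ ε₀ → 0 < e' → e' ≤ ε₀ →
          ‖smoothedRieszTransform m s φ e μ x - smoothedRieszTransform m s φ e' μ x‖ ≤ δ) →
        (∀ η : ℝ, 0 < η →
          LipschitzWith (Real.toNNReal (CL / η ^ (s + 1)))
            (smoothedRieszKernel m s φ η) ∧
          ∀ u : EuclideanSpace ℝ (Fin m), 3 * η < ‖u‖ →
            smoothedRieszKernel m s φ η u = 0) →
        ∀ x ∈ ball x₀ r ∩ Fδ, ∀ z ∈ ball x₀ r ∩ Fδ,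
          ‖smoothedRieszTransform m s φ ε μ x - smoothedRieszTransform m s φ ε μ z‖
            ≤ C₆ * δ :=
  cauchy_estimate_on_Fdelta_general s M CL hM hCL
end
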